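/- arXiv:1406.1368 — 4 statements merged into one kernel-verified Lean document; each statement's English description precedes it below -/
import Mathlib

section
/- Let K be a convex body in the plane with positive area. Let y_0 = min{y(p) : p ∈ K}, y_1 = max{y(p) : p ∈ K}, and for α ∈ (0,1) let y_α(K) be the unique value such that the area of {p ∈ K : y(p) ≤ y_α(K)} equals α·area(K). Then y_1 − y_{4/5}(K) ≤ y_{4/5}(K) − y_{1/5}(K) and y_{1/5}(K) − y_0 ≤ y_{4/5}(K) − y_{1/5}(K). -/
open MeasureTheory Set

/-- A horizontal line in the plane has measure zero. -/
lemma llmb_line_zero (t : ℝ) : volume {p : ℝ × ℝ | p.2 = t} = 0 := by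
  have h : {p : ℝ × ℝ | p.2 = t} = (univ : Set ℝ) ×ˢ ({t} : Set ℝ) := by
    ext ⟨x, y⟩; simp [Set.mem_prod, eq_comm]
  rw [h, Measure.volume_eq_prod, Measure.prod_prod]
  simp

/-- Contracting a set by 1/2 in the plane quarters its measure. -/
lemma llmb_scale (c : ℝ × ℝ) (S : Set (ℝ × ℝ)) :
    volume (AffineMap.homothety c (1/2 : ℝ) '' S) = ENNReal.ofReal (1/4) * volume S := by
  rw [Measure.addHaar_image_homothety]
  norm_num [abs_of_nonneg]

lemma llmb_homothety_mem {K : Set (ℝ × ℝ)} (hKconv : Convex ℝ K) {c p : ℝ × ℝ}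
    (hc : c ∈ K) (hp : p ∈ K) : AffineMap.homothety c (1/2 : ℝ) p ∈ K := by
  have h : AffineMap.homothety c (1/2 : ℝ) p = (1/2 : ℝ) • p + (1/2 : ℝ) • c := by
    simp only [AffineMap.homothety_apply, vsub_eq_sub, vadd_eq_add]
    module
  rw [h]
  exact hKconv hp hc (by norm_num) (by norm_num) (by norm_num)

lemma llmb_homothety_snd (c p : ℝ × ℝ) :
    (AffineMap.homothety c (1/2 : ℝ) p).2 = (c.2 + p.2) / 2 := by
  rw [AffineMap.homothety_apply]
  simp [Prod.smul_snd]
  ring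

/-- Contraction bound (below version). -/
lemma llmb_contract_below {K : Set (ℝ × ℝ)} (hKconv : Convex ℝ K) {c : ℝ × ℝ}
    (hc : c ∈ K) (t : ℝ) :
    ENNReal.ofReal (1/4) * volume {p ∈ K | p.2 ≤ t}
      ≤ volume {p ∈ K | p.2 ≤ (c.2 + t) / 2} := by
  rw [← llmb_scale c]
  apply measure_mono
  rintro _ ⟨p, ⟨hpK, hpt⟩, rfl⟩
  refine ⟨llmb_homothety_mem hKconv hc hpK, ?_⟩
  rw [llmb_homothety_snd]
  linarith

/-- Contraction bound (above version). -/
lemma llmb_contract_above {K : Set (ℝ × ℝ)} (hKconv : Convex ℝ K) {c : ℝ × ℝ}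
    (hc : c ∈ K) (t : ℝ) :
    ENNReal.ofReal (1/4) * volume {p ∈ K | t ≤ p.2}
      ≤ volume {p ∈ K | (c.2 + t) / 2 ≤ p.2} := by
  rw [← llmb_scale c]
  apply measure_mono
  rintro _ ⟨p, ⟨hpK, hpt⟩, rfl⟩
  refine ⟨llmb_homothety_mem hKconv hc hpK, ?_⟩
  rw [llmb_homothety_snd]
  linarith

/-- A point of a convex set at any intermediate height. -/
lemma llmb_ivt {K : Set (ℝ × ℝ)} (hKconv : Convex ℝ K) {pa pb : ℝ × ℝ}
    (ha : pa ∈ K) (hb : pb ∈ K) {y : ℝ} (h1 : pa.2 ≤ y) (h2 : y ≤ pb.2) :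
    ∃ p ∈ K, p.2 = y := by
  rcases eq_or_lt_of_le (h1.trans h2) with h | h
  · exact ⟨pa, ha, le_antisymm h1 (h ▸ h2)⟩
  · set s : ℝ := (y - pa.2) / (pb.2 - pa.2) with hs
    have hs0 : 0 ≤ s := div_nonneg (by linarith) (by linarith)
    have hs1 : s ≤ 1 := by
      rw [hs, div_le_one (by linarith)]; linarith
    refine ⟨(1 - s) • pa + s • pb, hKconv ha hb (by linarith) hs0 (by ring), ?_⟩
    have : ((1 - s) • pa + s • pb).2 = (1 - s) * pa.2 + s * pb.2 := by
      simp [Prod.smul_snd]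
    rw [this, hs]
    have hne : pb.2 - pa.2 ≠ 0 := by linarith
    field_simp
    ring

/-- Positive measure of an open horizontal strip meeting the convex body. -/
lemma llmb_strip_pos {K : Set (ℝ × ℝ)} (hKconv : Convex ℝ K) {q : ℝ × ℝ}
    (hq : q ∈ interior K) {lo hi : ℝ} {p : ℝ × ℝ} (hp : p ∈ K)
    (hplo : lo < p.2) (hphi : p.2 < hi) :
    0 < volume {r ∈ K | lo < r.2 ∧ r.2 < hi} := by
  set D : ℝ := |q.2 - p.2| with hD
  have hD0 : 0 ≤ D := abs_nonneg _
  set m : ℝ := min (hi - p.2) (p.2 - lo) with hm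
  have hm0 : 0 < m := lt_min (by linarith) (by linarith)
  set ε : ℝ := min (1/2) (m / (2 * (D + 1))) with hε
  have hε0 : 0 < ε := lt_min (by norm_num) (div_pos hm0 (by linarith))
  have hε1 : ε ≤ 1/2 := min_le_left _ _
  have hεD : ε * D < m := by
    have h1 : ε ≤ m / (2 * (D + 1)) := min_le_right _ _
    have h2 : ε * D ≤ m / (2 * (D + 1)) * D :=
      mul_le_mul_of_nonneg_right h1 hD0
    have h3 : m / (2 * (D + 1)) * D < m := by
      rw [div_mul_eq_mul_div, div_lt_iff₀ (by linarith)]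
      nlinarith
    linarith
  set r : ℝ × ℝ := ε • q + (1 - ε) • p with hr
  have hrint : r ∈ interior K :=
    hKconv.combo_interior_self_mem_interior hq hp hε0 (by linarith) (by ring)
  have hr2 : r.2 = ε * q.2 + (1 - ε) * p.2 := by simp [hr, Prod.smul_snd]
  have habs : |r.2 - p.2| < m := by
    have : r.2 - p.2 = ε * (q.2 - p.2) := by rw [hr2]; ring
    rw [this, abs_mul, abs_of_pos hε0]
    exact hεD
  have hlt := abs_lt.mp habs
  have hm1 : m ≤ hi - p.2 := min_le_left _ _
  have hm2 : m ≤ p.2 - lo := min_le_right _ _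
  have hrlo : lo < r.2 := by linarith [hlt.1]
  have hrhi : r.2 < hi := by linarith [hlt.2]
  have hopen : IsOpen (interior K ∩ {r : ℝ × ℝ | lo < r.2 ∧ r.2 < hi}) :=
    isOpen_interior.inter ((isOpen_lt continuous_const continuous_snd).and
      (isOpen_lt continuous_snd continuous_const))
  have hpos := hopen.measure_pos volume ⟨r, hrint, hrlo, hrhi⟩
  refine lt_of_lt_of_le hpos (measure_mono ?_)
  rintro x ⟨hx1, hx2⟩
  exact ⟨interior_subset hx1, hx2⟩

/-- For a convex body `K` in the plane with positive area, with
`y0 = min` and `y1 = max` of the `y`-coordinates of `K`, and `y15`, `y45` the levels splitting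
off a `1/5` resp. `4/5` fraction of the area from below, we have
`y1 − y45 ≤ y45 − y15` and `y15 − y0 ≤ y45 − y15`. -/
theorem level_lines_middle_band
    (K : Set (ℝ × ℝ)) (hKc : IsCompact K) (hKconv : Convex ℝ K)
    (hKint : (interior K).Nonempty) (hKpos : 0 < volume K)
    (y15 y45 : ℝ)
    (h15 : volume {p ∈ K | p.2 ≤ y15} = ENNReal.ofReal (1/5) * volume K)
    (h45 : volume {p ∈ K | p.2 ≤ y45} = ENNReal.ofReal (4/5) * volume K)
    (y0 y1 : ℝ) (hy0 : y0 = sInf (Prod.snd '' K)) (hy1 : y1 = sSup (Prod.snd '' K)) :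
    y1 - y45 ≤ y45 - y15 ∧ y15 - y0 ≤ y45 - y15 := by
  set A := volume K with hA
  have hAne : A ≠ 0 := hKpos.ne'
  have hAfin : A ≠ ⊤ := hKc.measure_lt_top.ne
  obtain ⟨q, hq⟩ := hKint
  have hKne : K.Nonempty := ⟨q, interior_subset hq⟩
  have himg : IsCompact (Prod.snd '' K) := hKc.image continuous_snd
  have himgne : (Prod.snd '' K).Nonempty := hKne.image _
  have hbddA : BddAbove (Prod.snd '' K) := himg.bddAbove
  have hbddB : BddBelow (Prod.snd '' K) := himg.bddBelow
  have hyle : ∀ p ∈ K, p.2 ≤ y1 := fun p hp => hy1 ▸ le_csSup hbddA ⟨p, hp, rfl⟩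
  have hyge : ∀ p ∈ K, y0 ≤ p.2 := fun p hp => hy0 ▸ csInf_le hbddB ⟨p, hp, rfl⟩
  obtain ⟨p1, hp1K, hp1y⟩ : ∃ p ∈ K, p.2 = y1 := by
    have h := himg.sSup_mem himgne
    rw [← hy1] at h
    obtain ⟨p, hpK, hpy⟩ := h
    exact ⟨p, hpK, hpy⟩
  obtain ⟨p0, hp0K, hp0y⟩ : ∃ p ∈ K, p.2 = y0 := by
    have h := himg.sInf_mem himgne
    rw [← hy0] at h
    obtain ⟨p, hpK, hpy⟩ := h
    exact ⟨p, hpK, hpy⟩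
  have hle : ∀ t : ℝ, MeasurableSet {p : ℝ × ℝ | p.2 ≤ t} :=
    fun t => measurableSet_le measurable_snd measurable_const
  -- partition of the volume of K at any level
  have hpart : ∀ t : ℝ, volume {p ∈ K | p.2 ≤ t} + volume {p ∈ K | t < p.2} = A := by
    intro t
    have h1 : {p ∈ K | p.2 ≤ t} = K ∩ {p : ℝ × ℝ | p.2 ≤ t} := by
      ext p; simp [Set.mem_sep_iff]
    have h2 : {p ∈ K | t < p.2} = K \ {p : ℝ × ℝ | p.2 ≤ t} := by
      ext p; simp [Set.mem_sep_iff, not_le]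
    rw [h1, h2]
    exact measure_inter_add_diff K (hle t)
  -- closed and open upper half-plane slices of K have the same volume
  have habove : ∀ t : ℝ, volume {p ∈ K | t ≤ p.2} = volume {p ∈ K | t < p.2} := by
    intro t
    apply le_antisymm
    · calc volume {p ∈ K | t ≤ p.2}
          ≤ volume ({p ∈ K | t < p.2} ∪ {p : ℝ × ℝ | p.2 = t}) := by
            apply measure_mono
            rintro p ⟨hpK, hpt⟩
            rcases lt_or_eq_of_le hpt with h | h
            · exact Or.inl ⟨hpK, h⟩
            · exact Or.inr h.symm
        _ ≤ volume {p ∈ K | t < p.2} + volume {p : ℝ × ℝ | p.2 = t} := measure_union_le _ _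
        _ = volume {p ∈ K | t < p.2} := by rw [llmb_line_zero, add_zero]
    · exact measure_mono fun p hp => ⟨hp.1, le_of_lt hp.2⟩
  have e15 : (ENNReal.ofReal (1/5) : ENNReal) + ENNReal.ofReal (4/5) = 1 := by
    rw [← ENNReal.ofReal_add (by norm_num) (by norm_num)]
    norm_num
  have hfin15 : ENNReal.ofReal (1/5) * A ≠ ⊤ := ENNReal.mul_ne_top ENNReal.ofReal_ne_top hAfin
  have hfin45 : ENNReal.ofReal (4/5) * A ≠ ⊤ := ENNReal.mul_ne_top ENNReal.ofReal_ne_top hAfin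
  have hsum : ENNReal.ofReal (1/5) * A + ENNReal.ofReal (4/5) * A = A := by
    rw [← add_mul, e15, one_mul]
  have hU15 : volume {p ∈ K | y15 < p.2} = ENNReal.ofReal (4/5) * A := by
    have h := hpart y15
    rw [h15] at h
    exact (ENNReal.add_right_inj hfin15).mp (h.trans hsum.symm)
  have hU45 : volume {p ∈ K | y45 < p.2} = ENNReal.ofReal (1/5) * A := by
    have h := hpart y45
    rw [h45] at h
    have hsum' : ENNReal.ofReal (4/5) * A + ENNReal.ofReal (1/5) * A = A := by
      rw [add_comm]; exact hsum
    exact (ENNReal.add_right_inj hfin45).mp (h.trans hsum'.symm)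
  have h5pos : 0 < ENNReal.ofReal (1/5) * A :=
    ENNReal.mul_pos ((ENNReal.ofReal_pos.mpr (by norm_num)).ne') hAne
  have h45pos : 0 < ENNReal.ofReal (4/5) * A :=
    ENNReal.mul_pos ((ENNReal.ofReal_pos.mpr (by norm_num)).ne') hAne
  -- basic strict inequalities between the levels
  have hy0lt45 : y0 < y45 := by
    by_contra h
    push_neg at h
    have hsub : {p ∈ K | p.2 ≤ y45} ⊆ {p : ℝ × ℝ | p.2 = y0} := by
      rintro p ⟨hpK, hpy⟩
      exact le_antisymm (hpy.trans h) (hyge p hpK)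
    have hm : volume {p ∈ K | p.2 ≤ y45} ≤ volume {p : ℝ × ℝ | p.2 = y0} :=
      measure_mono hsub
    rw [h45, llmb_line_zero] at hm
    exact absurd (le_antisymm hm zero_le) h45pos.ne'
  have hy15lt1 : y15 < y1 := by
    have hpos : volume {p ∈ K | y15 < p.2} ≠ 0 := by rw [hU15]; exact h45pos.ne'
    obtain ⟨p, hpK, hpy⟩ := nonempty_of_measure_ne_zero hpos
    exact lt_of_lt_of_le hpy (hyle p hpK)
  have hy45lt1 : y45 < y1 := by
    have hpos : volume {p ∈ K | y45 < p.2} ≠ 0 := by rw [hU45]; exact h5pos.ne'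
    obtain ⟨p, hpK, hpy⟩ := nonempty_of_measure_ne_zero hpos
    exact lt_of_lt_of_le hpy (hyle p hpK)
  have hq45 : ENNReal.ofReal (1/4) * (ENNReal.ofReal (4/5) * A) = ENNReal.ofReal (1/5) * A := by
    rw [← mul_assoc, ← ENNReal.ofReal_mul (by norm_num)]
    norm_num
  constructor
  · -- upper band
    have key : (p1.2 + y15) / 2 ≤ y45 := by
      by_contra hcon
      push_neg at hcon
      set m : ℝ := (p1.2 + y15) / 2 with hmdef
      have hc := llmb_contract_above hKconv hp1K y15
      have hAbove15 : volume {p ∈ K | y15 ≤ p.2} = ENNReal.ofReal (4/5) * A := by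
        rw [habove, hU15]
      rw [hAbove15, hq45] at hc
      -- split the volume above y45 at level m
      have hsplit : volume ({p ∈ K | y45 < p.2} ∩ {p : ℝ × ℝ | m ≤ p.2})
          + volume ({p ∈ K | y45 < p.2} \ {p : ℝ × ℝ | m ≤ p.2})
          = volume {p ∈ K | y45 < p.2} :=
        measure_inter_add_diff _ (measurableSet_le measurable_const measurable_snd)
      have hint : {p ∈ K | y45 < p.2} ∩ {p : ℝ × ℝ | m ≤ p.2} = {p ∈ K | m ≤ p.2} := by
        ext p
        constructor
        · rintro ⟨⟨h1, _⟩, h3⟩; exact ⟨h1, h3⟩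
        · rintro ⟨h1, h2⟩; exact ⟨⟨h1, lt_of_lt_of_le hcon h2⟩, h2⟩
      rw [hint, hU45] at hsplit
      have hfinm : volume {p ∈ K | m ≤ p.2} ≠ ⊤ :=
        ne_top_of_le_ne_top hAfin (measure_mono (Set.sep_subset _ _))
      have hdiff0 : volume ({p ∈ K | y45 < p.2} \ {p : ℝ × ℝ | m ≤ p.2}) = 0 := by
        have h1 : volume {p ∈ K | m ≤ p.2}
            + volume ({p ∈ K | y45 < p.2} \ {p : ℝ × ℝ | m ≤ p.2})
            ≤ volume {p ∈ K | m ≤ p.2} + 0 := by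
          rw [add_zero, hsplit]; exact hc
        exact le_antisymm ((ENNReal.add_le_add_iff_left hfinm).mp h1) zero_le
      -- but the strip strictly between y45 and m has positive volume
      have hmy1 : m < y1 := by rw [hmdef, hp1y]; linarith
      have hmidlt : y45 < (y45 + m) / 2 := by linarith
      have hmidlt2 : (y45 + m) / 2 < m := by linarith
      obtain ⟨ya, hya, hyalt⟩ := exists_lt_of_csInf_lt himgne
        (show sInf (Prod.snd '' K) < (y45 + m) / 2 by rw [← hy0]; linarith)
      obtain ⟨yb, hyb, hyblt⟩ := exists_lt_of_lt_csSup himgne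
        (show (y45 + m) / 2 < sSup (Prod.snd '' K) by rw [← hy1]; linarith)
      obtain ⟨pa, hpaK, hpae⟩ := hya
      obtain ⟨pb, hpbK, hpbe⟩ := hyb
      obtain ⟨pc, hpcK, hpce⟩ := llmb_ivt hKconv hpaK hpbK
        (y := (y45 + m) / 2) (by rw [hpae]; exact le_of_lt hyalt)
        (by rw [hpbe]; exact le_of_lt hyblt)
      have hstrip := llmb_strip_pos hKconv hq hpcK
        (lo := y45) (hi := m) (by rw [hpce]; exact hmidlt) (by rw [hpce]; exact hmidlt2)
      have hsub : {r ∈ K | y45 < r.2 ∧ r.2 < m}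
          ⊆ {p ∈ K | y45 < p.2} \ {p : ℝ × ℝ | m ≤ p.2} := by
        rintro r ⟨h1, h2, h3⟩
        exact ⟨⟨h1, h2⟩, not_le.mpr h3⟩
      have hmle : volume {r ∈ K | y45 < r.2 ∧ r.2 < m}
          ≤ volume ({p ∈ K | y45 < p.2} \ {p : ℝ × ℝ | m ≤ p.2}) := measure_mono hsub
      rw [hdiff0] at hmle
      exact absurd (le_antisymm hmle zero_le) hstrip.ne'
    rw [hp1y] at key
    linarith
  · -- lower band
    have key : y15 ≤ (p0.2 + y45) / 2 := by
      by_contra hcon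
      push_neg at hcon
      set m : ℝ := (p0.2 + y45) / 2 with hmdef
      have hc := llmb_contract_below hKconv hp0K y45
      rw [h45, hq45] at hc
      have hsplit : volume ({p ∈ K | p.2 ≤ y15} ∩ {p : ℝ × ℝ | p.2 ≤ m})
          + volume ({p ∈ K | p.2 ≤ y15} \ {p : ℝ × ℝ | p.2 ≤ m})
          = volume {p ∈ K | p.2 ≤ y15} :=
        measure_inter_add_diff _ (hle m)
      have hint : {p ∈ K | p.2 ≤ y15} ∩ {p : ℝ × ℝ | p.2 ≤ m} = {p ∈ K | p.2 ≤ m} := by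
        ext p
        constructor
        · rintro ⟨⟨h1, _⟩, h3⟩; exact ⟨h1, h3⟩
        · rintro ⟨h1, h2⟩; exact ⟨⟨h1, h2.trans (le_of_lt hcon)⟩, h2⟩
      rw [hint, h15] at hsplit
      have hfinm : volume {p ∈ K | p.2 ≤ m} ≠ ⊤ :=
        ne_top_of_le_ne_top hAfin (measure_mono (Set.sep_subset _ _))
      have hdiff0 : volume ({p ∈ K | p.2 ≤ y15} \ {p : ℝ × ℝ | p.2 ≤ m}) = 0 := by
        have h1 : volume {p ∈ K | p.2 ≤ m}
            + volume ({p ∈ K | p.2 ≤ y15} \ {p : ℝ × ℝ | p.2 ≤ m})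
            ≤ volume {p ∈ K | p.2 ≤ m} + 0 := by
          rw [add_zero, hsplit]; exact hc
        exact le_antisymm ((ENNReal.add_le_add_iff_left hfinm).mp h1) zero_le
      have hy0m : y0 < m := by rw [hmdef, hp0y]; linarith
      have hmidlt : m < (m + y15) / 2 := by linarith
      have hmidlt2 : (m + y15) / 2 < y15 := by linarith
      obtain ⟨ya, hya, hyalt⟩ := exists_lt_of_csInf_lt himgne
        (show sInf (Prod.snd '' K) < (m + y15) / 2 by rw [← hy0]; linarith)
      obtain ⟨yb, hyb, hyblt⟩ := exists_lt_of_lt_csSup himgne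
        (show (m + y15) / 2 < sSup (Prod.snd '' K) by rw [← hy1]; linarith)
      obtain ⟨pa, hpaK, hpae⟩ := hya
      obtain ⟨pb, hpbK, hpbe⟩ := hyb
      obtain ⟨pc, hpcK, hpce⟩ := llmb_ivt hKconv hpaK hpbK
        (y := (m + y15) / 2) (by rw [hpae]; exact le_of_lt hyalt)
        (by rw [hpbe]; exact le_of_lt hyblt)
      have hstrip := llmb_strip_pos hKconv hq hpcK
        (lo := m) (hi := y15) (by rw [hpce]; exact hmidlt) (by rw [hpce]; exact hmidlt2)
      have hsub : {r ∈ K | m < r.2 ∧ r.2 < y15}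
          ⊆ {p ∈ K | p.2 ≤ y15} \ {p : ℝ × ℝ | p.2 ≤ m} := by
        rintro r ⟨h1, h2, h3⟩
        exact ⟨⟨h1, le_of_lt h3⟩, not_le.mpr h2⟩
      have hmle : volume {r ∈ K | m < r.2 ∧ r.2 < y15}
          ≤ volume ({p ∈ K | p.2 ≤ y15} \ {p : ℝ × ℝ | p.2 ≤ m}) := measure_mono hsub
      rw [hdiff0] at hmle
      exact absurd (le_antisymm hmle zero_le) hstrip.ne'
    rw [hp0y] at key
    linarith
end

section
/- Let K be a convex body in the plane and let A be a real number with A ≥ area(K). Let a, b ∈ K satisfy y(a) ≥ y_{4/5}(K) and y(b) ≤ y_{1/5}(K) (in particular y(a) > y(b)). Then K is contained in the parallelogram Γ(a,b,A). -/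
open MeasureTheory Set intervalIntegral


lemma stdTri_eq : convexHull ℝ {((0:ℝ),(0:ℝ)), ((1:ℝ),(0:ℝ)), ((0:ℝ),(1:ℝ))} =
    {x : ℝ×ℝ | 0 ≤ x.1 ∧ 0 ≤ x.2 ∧ x.1 + x.2 ≤ 1} := by
  have hconv : Convex ℝ {x : ℝ×ℝ | 0 ≤ x.1 ∧ 0 ≤ x.2 ∧ x.1 + x.2 ≤ 1} := by
    intro x hx y hy s t hs ht hst
    simp only [mem_setOf_eq, Prod.fst_add, Prod.snd_add, Prod.smul_fst, Prod.smul_snd,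
      smul_eq_mul] at *
    refine ⟨by nlinarith [hx.1, hy.1], by nlinarith [hx.2.1, hy.2.1], by nlinarith [hx.2.2, hy.2.2]⟩
  apply le_antisymm
  · apply convexHull_min _ hconv
    rintro x (rfl | rfl | rfl) <;> norm_num
  · rintro ⟨u, v⟩ ⟨hu, hv, huv⟩
    simp only [mem_setOf_eq] at hu hv huv
    have key := (convex_convexHull ℝ ({((0:ℝ),(0:ℝ)), ((1:ℝ),(0:ℝ)), ((0:ℝ),(1:ℝ))} : Set (ℝ×ℝ))).sum_mem
      (t := (Finset.univ : Finset (Fin 3))) (w := ![1-u-v, u, v])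
      (z := ![((0:ℝ),(0:ℝ)), ((1:ℝ),(0:ℝ)), ((0:ℝ),(1:ℝ))]) ?_ ?_ ?_
    · convert key using 1
      simp [Fin.sum_univ_three, Prod.ext_iff]
    · intro i _
      fin_cases i <;> simp <;> linarith
    · simp [Fin.sum_univ_three]; ring
    · intro i _
      fin_cases i <;> simp [subset_convexHull] <;>
        exact subset_convexHull _ _ (by norm_num)


lemma stdTri_meas : MeasurableSet {x : ℝ×ℝ | 0 ≤ x.1 ∧ 0 ≤ x.2 ∧ x.1 + x.2 ≤ 1} := by
  apply MeasurableSet.inter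
  · exact measurableSet_le measurable_const measurable_fst
  apply MeasurableSet.inter
  · exact measurableSet_le measurable_const measurable_snd
  · exact measurableSet_le (measurable_fst.add measurable_snd) measurable_const

lemma stdTri_vol : volume {x : ℝ×ℝ | 0 ≤ x.1 ∧ 0 ≤ x.2 ∧ x.1 + x.2 ≤ 1} = ENNReal.ofReal (1/2) := by
  rw [Measure.volume_eq_prod, Measure.prod_apply_symm stdTri_meas]
  have hslice : ∀ y : ℝ, volume ((fun x => (x, y)) ⁻¹' {x : ℝ×ℝ | 0 ≤ x.1 ∧ 0 ≤ x.2 ∧ x.1 + x.2 ≤ 1})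
      = ENNReal.ofReal ((Icc (0:ℝ) 1).indicator (fun y => 1 - y) y) := by
    intro y
    rcases le_or_gt 0 y with hy | hy
    · have : ((fun x => (x, y)) ⁻¹' {x : ℝ×ℝ | 0 ≤ x.1 ∧ 0 ≤ x.2 ∧ x.1 + x.2 ≤ 1}) = Icc 0 (1-y) := by
        ext x; simp only [mem_preimage, mem_setOf_eq, mem_Icc]
        constructor
        · rintro ⟨h1, _, h3⟩; exact ⟨h1, by linarith⟩
        · rintro ⟨h1, h2⟩; exact ⟨h1, hy, by linarith⟩
      rw [this, Real.volume_Icc]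
      rcases le_or_gt y 1 with hy1 | hy1
      · rw [indicator_of_mem (by exact ⟨hy, hy1⟩)]; norm_num
      · rw [indicator_of_notMem (by simp [hy1.not_ge])]
        rw [ENNReal.ofReal_eq_zero.2 (by linarith), ENNReal.ofReal_zero]
    · have : ((fun x => (x, y)) ⁻¹' {x : ℝ×ℝ | 0 ≤ x.1 ∧ 0 ≤ x.2 ∧ x.1 + x.2 ≤ 1}) = ∅ := by
        ext x; simp only [mem_preimage, mem_setOf_eq, mem_empty_iff_false, iff_false]
        rintro ⟨_, h2, _⟩; linarith
      rw [this, measure_empty, indicator_of_notMem (by simp [hy.not_ge]), ENNReal.ofReal_zero]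
  simp_rw [hslice]
  have hint : Integrable ((Icc (0:ℝ) 1).indicator (fun y => 1 - y)) := by
    apply (IntegrableOn.integrable_indicator _ measurableSet_Icc)
    exact (continuous_const.sub continuous_id).integrableOn_Icc
  rw [← ofReal_integral_eq_lintegral_ofReal hint]
  · congr 1
    rw [MeasureTheory.integral_indicator measurableSet_Icc, integral_Icc_eq_integral_Ioc,
      ← intervalIntegral.integral_of_le (by norm_num : (0:ℝ) ≤ 1)]
    have : ∫ y in (0:ℝ)..1, (1 - y) = 1 - 1/2 := by
      rw [intervalIntegral.integral_sub intervalIntegrable_const intervalIntegral.intervalIntegrable_id]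
      rw [integral_id]
      simp
    rw [this]; norm_num
  · filter_upwards with y
    by_cases h : y ∈ Icc (0:ℝ) 1
    · rw [indicator_of_mem h]; simp at h ⊢; linarith [h.2]
    · rw [indicator_of_notMem h]; exact le_refl 0

lemma tri_det_le {K : Set (ℝ×ℝ)} (hKconv : Convex ℝ K) (hKc : IsCompact K)
    {a b p : ℝ×ℝ} (ha : a ∈ K) (hb : b ∈ K) (hp : p ∈ K) :
    |(b.1-a.1)*(p.2-a.2) - (p.1-a.1)*(b.2-a.2)| ≤ 2 * (volume K).toReal := by
  set M : Matrix (Fin 2) (Fin 2) ℝ := !![b.1-a.1, p.1-a.1; b.2-a.2, p.2-a.2] with hM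
  set B := Module.Basis.finTwoProd ℝ with hB
  set L : (ℝ×ℝ) →ₗ[ℝ] (ℝ×ℝ) := Matrix.toLin B B M with hL
  have hdet : LinearMap.det L = (b.1-a.1)*(p.2-a.2) - (p.1-a.1)*(b.2-a.2) := by
    rw [hL, LinearMap.det_toLin, hM, Matrix.det_fin_two_of]
  have hL0 : L ((1:ℝ),(0:ℝ)) = b - a := by
    have : ((1:ℝ),(0:ℝ)) = B 0 := by simp [hB, Module.Basis.finTwoProd]
    rw [this, hL, Matrix.toLin_self]
    simp [hM, Fin.sum_univ_two, hB, Module.Basis.finTwoProd, Prod.ext_iff]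
  have hL1 : L ((0:ℝ),(1:ℝ)) = p - a := by
    have : ((0:ℝ),(1:ℝ)) = B 1 := by simp [hB, Module.Basis.finTwoProd]
    rw [this, hL, Matrix.toLin_self]
    simp [hM, Fin.sum_univ_two, hB, Module.Basis.finTwoProd, Prod.ext_iff]
  -- the affine image of the standard triangle is inside K
  have himg : (fun x => a + L x) '' {x : ℝ×ℝ | 0 ≤ x.1 ∧ 0 ≤ x.2 ∧ x.1 + x.2 ≤ 1} ⊆ K := by
    rw [← stdTri_eq]
    rintro _ ⟨x, hx, rfl⟩
    have hx' : x ∈ convexHull ℝ {((0:ℝ),(0:ℝ)), ((1:ℝ),(0:ℝ)), ((0:ℝ),(1:ℝ))} := hx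
    -- the map x ↦ a + L x is affine
    have : Convex ℝ ((fun x => a + L x) ⁻¹' K) := by
      intro u hu v hv s t hs ht hst
      simp only [mem_preimage] at *
      have : a + L (s • u + t • v) = s • (a + L u) + t • (a + L v) := by
        rw [map_add, LinearMap.map_smul, LinearMap.map_smul, smul_add, smul_add]
        have ha' : s • a + t • a = a := by rw [← add_smul, hst, one_smul]
        nth_rewrite 1 [← ha']
        abel
      rw [this]
      exact hKconv hu hv hs ht hst
    have hsub : {((0:ℝ),(0:ℝ)), ((1:ℝ),(0:ℝ)), ((0:ℝ),(1:ℝ))} ⊆ ((fun x => a + L x) ⁻¹' K) := by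
      rintro y (rfl | rfl | rfl) <;> simp only [mem_preimage]
      · rw [show ((0:ℝ),(0:ℝ)) = (0 : ℝ×ℝ) from rfl, map_zero, add_zero]; exact ha
      · rw [hL0]; simpa using hb
      · rw [hL1]; simpa using hp
    exact convexHull_min hsub this hx'
  have hvol : volume ((fun x => a + L x) '' {x : ℝ×ℝ | 0 ≤ x.1 ∧ 0 ≤ x.2 ∧ x.1 + x.2 ≤ 1})
      = ENNReal.ofReal |LinearMap.det L| * ENNReal.ofReal (1/2) := by
    have : (fun x => a + L x) '' {x : ℝ×ℝ | 0 ≤ x.1 ∧ 0 ≤ x.2 ∧ x.1 + x.2 ≤ 1}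
        = (a + ·) '' (L '' {x : ℝ×ℝ | 0 ≤ x.1 ∧ 0 ≤ x.2 ∧ x.1 + x.2 ≤ 1}) := by
      rw [Set.image_image]
    rw [this, Set.image_add_left, measure_preimage_add,
      Measure.addHaar_image_linearMap, stdTri_vol]
  have hle : ENNReal.ofReal |LinearMap.det L| * ENNReal.ofReal (1/2) ≤ volume K := by
    rw [← hvol]; exact measure_mono himg
  rw [← ENNReal.ofReal_mul (abs_nonneg _)] at hle
  have hfin : volume K ≠ ⊤ := hKc.measure_lt_top.ne
  have := (ENNReal.ofReal_le_iff_le_toReal hfin).1 hle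
  rw [hdet] at this
  linarith [this]

section core
variable {K : Set (ℝ×ℝ)}

/-- integral of an affine function over `Icc` -/
lemma lin_int (W q c l u : ℝ) (h : l ≤ u) :
    ∫ y in Icc l u, (W + q*(y-c)) = W*(u-l) + q*(((u-c)^2 - (l-c)^2)/2) := by
  rw [integral_Icc_eq_integral_Ioc, ← intervalIntegral.integral_of_le h]
  have h1 : IntervalIntegrable (fun y : ℝ => q*(y-c)) volume l u :=
    (continuous_const.mul (continuous_id.sub continuous_const)).intervalIntegrable _ _
  rw [intervalIntegral.integral_add intervalIntegrable_const h1,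
    intervalIntegral.integral_const_mul]
  have h2 : (∫ y in l..u, (y - c)) = ((u-c)^2 - (l-c)^2)/2 := by
    rw [intervalIntegral.integral_comp_sub_right (fun x => x) c, integral_id]
  rw [h2, intervalIntegral.integral_const]
  simp [smul_eq_mul, mul_comm]

lemma final_alg (W Wp q h D V : ℝ) (hWnn : 0 ≤ W) (hWpnn : 0 ≤ Wp) (hWp : Wp = W + q*D)
    (hh : 0 < h) (hD : h < D) (hV : 0 < V)
    (hI1 : 3/5*V ≤ W*h - q*h^2/2) (hI2 : W*D + q*D^2/2 ≤ 1/5*V) : False := by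
  rcases le_or_gt q 0 with hq | hq
  · have key : W*(3*D-h) + q*(3*D^2+h^2)/2 ≤ 0 := by linarith
    have hWD : (3*D-h)*(-q*D) ≤ (3*D-h)*W := by
      apply mul_le_mul_of_nonneg_left _ (by linarith)
      linarith
    have hpos : 0 < (3*D+h)*(D-h) := mul_pos (by linarith) (by linarith)
    have hq0 : q = 0 := by nlinarith
    rw [hq0] at key hI1
    have hW0 : W ≤ 0 := by nlinarith
    nlinarith
  · have hWpos : 0 < W := by nlinarith
    have : W*h < W*D := mul_lt_mul_of_pos_left hD hWpos
    nlinarith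

set_option maxHeartbeats 1000000 in
lemma vert_bound (hKconv : Convex ℝ K) (hKc : IsCompact K)
    {c' c : ℝ} (hcc : c' < c)
    (hV : 0 < (volume K).toReal)
    (hmid : 3/5 * (volume K).toReal ≤ (volume (K ∩ {q : ℝ×ℝ | c' ≤ q.2 ∧ q.2 ≤ c})).toReal)
    (htop : (volume (K ∩ {q : ℝ×ℝ | c ≤ q.2})).toReal ≤ 1/5 * (volume K).toReal)
    {b p : ℝ×ℝ} (hb : b ∈ K) (hbc : b.2 ≤ c') (hp : p ∈ K) :
    p.2 ≤ 2*c - c' := by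
  by_contra hcon
  push_neg at hcon
  set V := (volume K).toReal with hVdef
  set P := p.2 with hP
  have hKm : MeasurableSet K := hKc.measurableSet
  have hKfin : volume K ≠ ⊤ := hKc.measure_lt_top.ne
  have hcP : c < P := by linarith
  have hbP : b.2 < P := by linarith
  -- bound for K
  obtain ⟨R, hR⟩ := hKc.isBounded.subset_closedBall 0
  -- sections
  set sec : ℝ → Set ℝ := fun y => {x | (x, y) ∈ K} with hsec
  have hsecsub : ∀ y, sec y ⊆ Icc (-R) R := by
    intro y x hx
    have := hR hx
    rw [Metric.mem_closedBall, dist_zero_right] at this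
    have hx1 : |x| ≤ R := le_trans (norm_fst_le ((x, y) : ℝ×ℝ)) this
    exact abs_le.1 hx1
  have hsecfin : ∀ y, volume (sec y) < ⊤ :=
    fun y => lt_of_le_of_lt (measure_mono (hsecsub y)) (by rw [Real.volume_Icc]; exact ENNReal.ofReal_lt_top)
  have hsecconv : ∀ y, Convex ℝ (sec y) := by
    intro y x1 h1 x2 h2 s t hs ht hst
    have hyy : s * y + t * y = y := by rw [← add_mul, hst, one_mul]
    have : (s • x1 + t • x2, y) = s • ((x1, y) : ℝ×ℝ) + t • (x2, y) := by
      simp [Prod.ext_iff, smul_eq_mul, hyy]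
    show (s • x1 + t • x2, y) ∈ K
    rw [this]
    exact hKconv h1 h2 hs ht hst
  have hseccl : ∀ y, IsCompact (sec y) := by
    intro y
    apply IsCompact.of_isClosed_subset isCompact_Icc _ (hsecsub y)
    exact hKc.isClosed.preimage (Continuous.prodMk_left y)
  have hsecne : ∀ y, b.2 ≤ y → y ≤ P → (sec y).Nonempty := by
    intro y hy1 hy2
    set lam := (y - b.2) / (P - b.2) with hlam
    have hPb : 0 < P - b.2 := by linarith
    have hl0 : 0 ≤ lam := div_nonneg (by linarith) hPb.le
    have hl1 : lam ≤ 1 := (div_le_one hPb).2 (by linarith)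
    have hmem : (1 - lam) • b + lam • p ∈ K := hKconv hb hp (by linarith) hl0 (by ring)
    refine ⟨((1 - lam) • b + lam • p).1, ?_⟩
    show ((((1 - lam) • b + lam • p).1, y) : ℝ×ℝ) ∈ K
    have hy : ((1 - lam) • b + lam • p).2 = y := by
      have hlp : lam * (p.2 - b.2) = y - b.2 := by
        rw [hlam, ← hP]; exact div_mul_cancel₀ _ hPb.ne'
      simp only [Prod.snd_add, Prod.smul_snd, smul_eq_mul]
      linear_combination hlp
    rw [← hy]
    exact hmem
  set w : ℝ → ℝ := fun y => (volume (sec y)).toReal with hw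
  have hwnn : ∀ y, 0 ≤ w y := fun y => ENNReal.toReal_nonneg
  have hwmeas : Measurable w := (measurable_measure_prodMk_right hKm).ennreal_toReal
  have hR0 : 0 ≤ R := le_trans dist_nonneg (Metric.mem_closedBall.1 (hR hb))
  have hwbdd : ∀ y, w y ≤ 2*R := by
    intro y
    have : volume (sec y) ≤ volume (Icc (-R) R) := measure_mono (hsecsub y)
    rw [Real.volume_Icc] at this
    calc w y ≤ (ENNReal.ofReal (R - -R)).toReal := ENNReal.toReal_mono ENNReal.ofReal_ne_top this
    _ ≤ 2*R := by rw [ENNReal.toReal_ofReal (by linarith : (0:ℝ) ≤ R - -R)]; linarith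
  -- concavity step
  have step : ∀ y1 y2 s t : ℝ, b.2 ≤ y1 → y1 ≤ P → b.2 ≤ y2 → y2 ≤ P →
      0 ≤ s → 0 ≤ t → s + t = 1 → s * w y1 + t * w y2 ≤ w (s*y1 + t*y2) := by
    intro y1 y2 s t hy1 hy1' hy2 hy2' hs ht hst
    obtain ⟨x1, hx1⟩ := hsecne y1 hy1 hy1'
    obtain ⟨x2, hx2⟩ := hsecne y2 hy2 hy2'
    have hicc1 : sec y1 = Icc (sInf (sec y1)) (sSup (sec y1)) :=
      eq_Icc_of_connected_compact ⟨⟨x1, hx1⟩, (hsecconv y1).isPreconnected⟩ (hseccl y1)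
    have hicc2 : sec y2 = Icc (sInf (sec y2)) (sSup (sec y2)) :=
      eq_Icc_of_connected_compact ⟨⟨x2, hx2⟩, (hsecconv y2).isPreconnected⟩ (hseccl y2)
    set f1 := sInf (sec y1); set g1 := sSup (sec y1)
    set f2 := sInf (sec y2); set g2 := sSup (sec y2)
    have hfg1 : f1 ≤ g1 := by
      by_contra hh
      rw [hicc1] at hx1
      exact hh (le_trans (mem_Icc.1 hx1).1 (mem_Icc.1 hx1).2)
    have hfg2 : f2 ≤ g2 := by
      by_contra hh
      rw [hicc2] at hx2
      exact hh (le_trans (mem_Icc.1 hx2).1 (mem_Icc.1 hx2).2)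
    have hw1 : w y1 = g1 - f1 := by
      rw [hw]; simp only []
      rw [hicc1, Real.volume_Icc, ENNReal.toReal_ofReal (by linarith)]
    have hw2 : w y2 = g2 - f2 := by
      rw [hw]; simp only []
      rw [hicc2, Real.volume_Icc, ENNReal.toReal_ofReal (by linarith)]
    have hf1K : ((f1, y1) : ℝ×ℝ) ∈ K := by
      have : f1 ∈ sec y1 := by rw [hicc1]; exact ⟨le_refl _, hfg1⟩
      exact this
    have hg1K : ((g1, y1) : ℝ×ℝ) ∈ K := by
      have : g1 ∈ sec y1 := by rw [hicc1]; exact ⟨hfg1, le_refl _⟩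
      exact this
    have hf2K : ((f2, y2) : ℝ×ℝ) ∈ K := by
      have : f2 ∈ sec y2 := by rw [hicc2]; exact ⟨le_refl _, hfg2⟩
      exact this
    have hg2K : ((g2, y2) : ℝ×ℝ) ∈ K := by
      have : g2 ∈ sec y2 := by rw [hicc2]; exact ⟨hfg2, le_refl _⟩
      exact this
    have hFmem : s*f1 + t*f2 ∈ sec (s*y1 + t*y2) := by
      have := hKconv hf1K hf2K hs ht hst
      exact (by simpa [Prod.ext_iff, smul_eq_mul] using this : (s*f1 + t*f2, s*y1 + t*y2) ∈ K)
    have hGmem : s*g1 + t*g2 ∈ sec (s*y1 + t*y2) := by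
      have := hKconv hg1K hg2K hs ht hst
      exact (by simpa [Prod.ext_iff, smul_eq_mul] using this : (s*g1 + t*g2, s*y1 + t*y2) ∈ K)
    have hsubI : Icc (s*f1 + t*f2) (s*g1 + t*g2) ⊆ sec (s*y1 + t*y2) :=
      ((hsecconv _).ordConnected).out hFmem hGmem
    have hvolI : volume (Icc (s*f1 + t*f2) (s*g1 + t*g2)) ≤ volume (sec (s*y1 + t*y2)) :=
      measure_mono hsubI
    rw [Real.volume_Icc] at hvolI
    have := ENNReal.toReal_mono (hsecfin _).ne hvolI
    rw [ENNReal.toReal_ofReal (by nlinarith)] at this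
    calc s * w y1 + t * w y2 = s*g1 + t*g2 - (s*f1 + t*f2) := by rw [hw1, hw2]; ring
    _ ≤ w (s*y1 + t*y2) := this
  -- slab volume identity
  have hslice : ∀ l u : ℝ, volume (K ∩ {q : ℝ×ℝ | l ≤ q.2 ∧ q.2 ≤ u})
      = ∫⁻ y in Icc l u, volume (sec y) := by
    intro l u
    have hmeasS : MeasurableSet (K ∩ {q : ℝ×ℝ | l ≤ q.2 ∧ q.2 ≤ u}) := by
      exact hKm.inter ((measurableSet_le measurable_const measurable_snd).inter
        (measurableSet_le measurable_snd measurable_const))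
    rw [Measure.volume_eq_prod, Measure.prod_apply_symm hmeasS,
      ← lintegral_indicator measurableSet_Icc _]
    congr 1
    ext y
    by_cases hy : y ∈ Icc l u
    · rw [indicator_of_mem hy]
      congr 1
      ext x
      simp only [mem_preimage, mem_inter_iff, mem_setOf_eq]
      exact ⟨fun h => h.1, fun h => ⟨h, (mem_Icc.1 hy).1, (mem_Icc.1 hy).2⟩⟩
    · rw [indicator_of_notMem hy]
      have : ((fun x => (x, y)) ⁻¹' (K ∩ {q : ℝ×ℝ | l ≤ q.2 ∧ q.2 ≤ u})) = (∅ : Set ℝ) := by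
        ext x
        simp only [mem_preimage, mem_inter_iff, mem_setOf_eq, mem_empty_iff_false, iff_false]
        rintro ⟨-, h1, h2⟩
        exact hy (mem_Icc.2 ⟨h1, h2⟩)
      rw [this, measure_empty]
  have hslabR : ∀ l u : ℝ, (volume (K ∩ {q : ℝ×ℝ | l ≤ q.2 ∧ q.2 ≤ u})).toReal
      = ∫ y in Icc l u, w y := by
    intro l u
    rw [hslice l u]
    exact (integral_toReal ((measurable_measure_prodMk_right hKm).aemeasurable.restrict)
      (ae_of_all _ fun y => hsecfin y)).symm
  have hintw : ∀ l u : ℝ, IntegrableOn w (Icc l u) := by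
    intro l u
    haveI : IsFiniteMeasure (volume.restrict (Icc l u)) :=
      ⟨by rw [Measure.restrict_apply_univ, Real.volume_Icc]; exact ENNReal.ofReal_lt_top⟩
    refine ⟨hwmeas.aestronglyMeasurable.restrict, HasFiniteIntegral.of_bounded (C := 2*R)
      (ae_of_all _ fun y => ?_)⟩
    rw [Real.norm_eq_abs, abs_of_nonneg (hwnn y)]
    exact hwbdd y
  have hD : (0:ℝ) < P - c := by linarith
  have hne : P - c ≠ 0 := ne_of_gt hD
  set qq := (w P - w c)/(P - c) with hqdef
  have hqD : qq * (P - c) = w P - w c := by rw [hqdef]; field_simp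
  -- pointwise bounds
  have hup : ∀ y ∈ Icc c' c, w y ≤ w c + qq*(y-c) := by
    intro y hy
    obtain ⟨hy1, hy2⟩ := mem_Icc.1 hy
    have hPy : 0 < P - y := by linarith
    have hPyne : P - y ≠ 0 := ne_of_gt hPy
    have hcomb := step y P ((P-c)/(P-y)) ((c-y)/(P-y)) (by linarith) (by linarith)
      (by linarith) le_rfl (div_nonneg (by linarith) hPy.le) (div_nonneg (by linarith) hPy.le)
      (by rw [← add_div, show P - c + (c - y) = P - y by ring, div_self hPyne])
    have hco : (P-c)/(P-y) * y + (c-y)/(P-y) * P = c := by field_simp; ring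
    rw [hco] at hcomb
    rw [div_mul_eq_mul_div, div_mul_eq_mul_div, ← add_div, div_le_iff₀ hPy] at hcomb
    have h3 : w y * (P - c) ≤ (P-c)*(w c) + (w P - w c)*(y-c) := by nlinarith [hcomb]
    have h4 : w y ≤ ((P-c)*(w c) + (w P - w c)*(y-c))/(P-c) := (le_div_iff₀ hD).2 h3
    calc w y ≤ ((P-c)*(w c) + (w P - w c)*(y-c))/(P-c) := h4
    _ = w c + qq*(y-c) := by rw [hqdef]; field_simp
  have hlo : ∀ y ∈ Icc c P, w c + qq*(y-c) ≤ w y := by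
    intro y hy
    obtain ⟨hy1, hy2⟩ := mem_Icc.1 hy
    have hcomb := step c P ((P-y)/(P-c)) ((y-c)/(P-c)) (by linarith) (by linarith) (by linarith)
      le_rfl (div_nonneg (by linarith) hD.le) (div_nonneg (by linarith) hD.le)
      (by rw [← add_div, show P - y + (y - c) = P - c by ring, div_self hne])
    have hco : (P-y)/(P-c) * c + (y-c)/(P-c) * P = y := by field_simp; ring
    rw [hco] at hcomb
    calc w c + qq*(y-c) = (P-y)/(P-c) * w c + (y-c)/(P-c) * w P := by
          rw [hqdef]; field_simp; ring
    _ ≤ w y := hcomb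
  -- integral comparisons
  have hlint : ∀ l u : ℝ, IntegrableOn (fun y => w c + qq*(y-c)) (Icc l u) :=
    fun l u => (continuous_const.add (continuous_const.mul
      (continuous_id.sub continuous_const))).integrableOn_Icc
  have hI1 : 3/5*V ≤ (w c)*(c-c') - qq*(c-c')^2/2 := by
    have e1 := lin_int (w c) qq c c' c (by linarith)
    calc 3/5*V ≤ (volume (K ∩ {q : ℝ×ℝ | c' ≤ q.2 ∧ q.2 ≤ c})).toReal := hmid
    _ = ∫ y in Icc c' c, w y := hslabR c' c
    _ ≤ ∫ y in Icc c' c, (w c + qq*(y-c)) :=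
      setIntegral_mono_on (hintw c' c) (hlint c' c) measurableSet_Icc hup
    _ = (w c)*(c-c') + qq*(((c-c)^2 - (c'-c)^2)/2) := e1
    _ = (w c)*(c-c') - qq*(c-c')^2/2 := by ring
  have hI2 : (w c)*(P-c) + qq*(P-c)^2/2 ≤ 1/5*V := by
    have e1 := lin_int (w c) qq c c P (by linarith)
    have hfin2 : volume (K ∩ {q : ℝ×ℝ | c ≤ q.2}) ≠ ⊤ :=
      ((measure_mono inter_subset_left).trans_lt hKc.measure_lt_top).ne
    calc (w c)*(P-c) + qq*(P-c)^2/2 = (w c)*(P-c) + qq*(((P-c)^2 - (c-c)^2)/2) := by ring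
    _ = ∫ y in Icc c P, (w c + qq*(y-c)) := e1.symm
    _ ≤ ∫ y in Icc c P, w y :=
      setIntegral_mono_on (hlint c P) (hintw c P) measurableSet_Icc hlo
    _ = (volume (K ∩ {q : ℝ×ℝ | c ≤ q.2 ∧ q.2 ≤ P})).toReal := (hslabR c P).symm
    _ ≤ (volume (K ∩ {q : ℝ×ℝ | c ≤ q.2})).toReal :=
      ENNReal.toReal_mono hfin2 (measure_mono (fun x hx => ⟨hx.1, hx.2.1⟩))
    _ ≤ 1/5*V := htop
  exact final_alg (w c) (w P) qq (c-c') (P-c) V (hwnn c) (hwnn P) (by linarith [hqD])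
    (by linarith) (by linarith) hV hI1 hI2
end core
noncomputable def Gamma (a b : ℝ × ℝ) (A : ℝ) : Set (ℝ × ℝ) :=
  {p | ∃ q ∈ segment ℝ ((2 : ℝ) • a - b) ((2 : ℝ) • b - a),
        ∃ t : ℝ, |t| ≤ 2 * A / |a.2 - b.2| ∧ p = q + (t, 0)}



set_option maxHeartbeats 1000000 in
/-- Let `K` be a convex body in the plane and `A ≥ area(K)`. If `a, b ∈ K`
satisfy `y(a) ≥ y_{4/5}(K)` and `y(b) ≤ y_{1/5}(K)` (where `y_α(K)` is the level splitting off
an `α` fraction of the area of `K` from below), then `K ⊆ Γ(a,b,A)`. -/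
theorem convex_body_subset_gamma
    (K : Set (ℝ × ℝ)) (hKc : IsCompact K) (hKconv : Convex ℝ K)
    (hKint : (interior K).Nonempty)
    (A : ℝ) (hA : (volume K).toReal ≤ A)
    (y15 y45 : ℝ)
    (h15 : volume {p ∈ K | p.2 ≤ y15} = ENNReal.ofReal (1/5) * volume K)
    (h45 : volume {p ∈ K | p.2 ≤ y45} = ENNReal.ofReal (4/5) * volume K)
    (a b : ℝ × ℝ) (ha : a ∈ K) (hb : b ∈ K)
    (hay : y45 ≤ a.2) (hby : b.2 ≤ y15) :
    K ⊆ Gamma a b A := by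
  intro p hp
  have hKm : MeasurableSet K := hKc.measurableSet
  have hKfin : volume K ≠ ⊤ := hKc.measure_lt_top.ne
  have hVK0 : volume K ≠ 0 := (Measure.measure_pos_of_nonempty_interior _ hKint).ne'
  have hV : 0 < (volume K).toReal := ENNReal.toReal_pos hVK0 hKfin
  -- y15 < y45
  have hy : y15 < y45 := by
    by_contra hcon
    push_neg at hcon
    have hsub : {p ∈ K | p.2 ≤ y45} ⊆ {p ∈ K | p.2 ≤ y15} :=
      fun x hx => ⟨hx.1, hx.2.trans hcon⟩
    have hle := measure_mono (μ := volume) hsub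
    rw [h45, h15] at hle
    have := (ENNReal.mul_le_mul_iff_left hVK0 hKfin).1 hle
    rw [ENNReal.ofReal_le_ofReal_iff (by norm_num)] at this
    linarith
  have hab : b.2 < a.2 := lt_of_le_of_lt hby (lt_of_lt_of_le hy hay)
  have fin15 : volume {p ∈ K | p.2 ≤ y15} ≠ ⊤ :=
    ((measure_mono (sep_subset _ _)).trans_lt hKc.measure_lt_top).ne
  have fin45 : volume {p ∈ K | p.2 ≤ y45} ≠ ⊤ :=
    ((measure_mono (sep_subset _ _)).trans_lt hKc.measure_lt_top).ne
  have hm15 : MeasurableSet {p ∈ K | p.2 ≤ y15} :=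
    hKm.inter (measurableSet_le measurable_snd measurable_const)
  have hm45 : MeasurableSet {p ∈ K | p.2 ≤ y45} :=
    hKm.inter (measurableSet_le measurable_snd measurable_const)
  have ht45 : (volume {p ∈ K | p.2 ≤ y45}).toReal = 4/5*(volume K).toReal := by
    rw [h45, ENNReal.toReal_mul, ENNReal.toReal_ofReal (by norm_num)]
  have ht15 : (volume {p ∈ K | p.2 ≤ y15}).toReal = 1/5*(volume K).toReal := by
    rw [h15, ENNReal.toReal_mul, ENNReal.toReal_ofReal (by norm_num)]
  -- middle slab lower bound
  have hsub15 : {p ∈ K | p.2 ≤ y15} ⊆ {p ∈ K | p.2 ≤ y45} :=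
    fun x hx => ⟨hx.1, hx.2.trans hy.le⟩
  have hdiffR : (volume ({p ∈ K | p.2 ≤ y45} \ {p ∈ K | p.2 ≤ y15})).toReal
      = 4/5*(volume K).toReal - 1/5*(volume K).toReal := by
    rw [measure_diff hsub15 hm15.nullMeasurableSet fin15,
      ENNReal.toReal_sub_of_le (measure_mono hsub15) fin45, ht45, ht15]
  have finslab : volume (K ∩ {q : ℝ×ℝ | b.2 ≤ q.2 ∧ q.2 ≤ a.2}) ≠ ⊤ :=
    ((measure_mono inter_subset_left).trans_lt hKc.measure_lt_top).ne
  have hmid : 3/5 * (volume K).toReal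
      ≤ (volume (K ∩ {q : ℝ×ℝ | b.2 ≤ q.2 ∧ q.2 ≤ a.2})).toReal := by
    have hsubm : {p ∈ K | p.2 ≤ y45} \ {p ∈ K | p.2 ≤ y15}
        ⊆ K ∩ {q : ℝ×ℝ | b.2 ≤ q.2 ∧ q.2 ≤ a.2} := by
      rintro x ⟨⟨hxK, hx45⟩, hnot⟩
      have hx15 : ¬ (x.2 ≤ y15) := fun hc => hnot ⟨hxK, hc⟩
      push_neg at hx15
      exact ⟨hxK, by linarith, by linarith⟩
    have hmono := ENNReal.toReal_mono finslab (measure_mono hsubm)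
    rw [hdiffR] at hmono
    linarith
  -- top bound
  have htop : (volume (K ∩ {q : ℝ×ℝ | a.2 ≤ q.2})).toReal ≤ 1/5 * (volume K).toReal := by
    have hcover : K ∩ {q : ℝ×ℝ | a.2 ≤ q.2}
        ⊆ (K \ {p ∈ K | p.2 ≤ y45}) ∪ ((univ : Set ℝ) ×ˢ ({y45} : Set ℝ)) := by
      rintro x ⟨hxK, hx2⟩
      by_cases hle : x.2 ≤ y45
      · right
        have : x.2 = y45 := le_antisymm hle (le_trans hay hx2)
        exact ⟨mem_univ _, this⟩
      · left
        exact ⟨hxK, fun hc => hle hc.2⟩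
    have hline : volume ((univ : Set ℝ) ×ˢ ({y45} : Set ℝ)) = 0 := by
      rw [Measure.volume_eq_prod, Measure.prod_prod]
      simp
    have hest : volume (K ∩ {q : ℝ×ℝ | a.2 ≤ q.2})
        ≤ volume K - volume {p ∈ K | p.2 ≤ y45} := by
      calc volume (K ∩ {q : ℝ×ℝ | a.2 ≤ q.2})
          ≤ volume ((K \ {p ∈ K | p.2 ≤ y45}) ∪ ((univ : Set ℝ) ×ˢ ({y45} : Set ℝ))) :=
            measure_mono hcover
      _ ≤ volume (K \ {p ∈ K | p.2 ≤ y45}) + volume ((univ : Set ℝ) ×ˢ ({y45} : Set ℝ)) :=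
            measure_union_le _ _
      _ = volume (K \ {p ∈ K | p.2 ≤ y45}) := by rw [hline, add_zero]
      _ = volume K - volume {p ∈ K | p.2 ≤ y45} :=
            measure_diff (sep_subset _ _) hm45.nullMeasurableSet fin45
    have h1 := ENNReal.toReal_mono (a := volume (K ∩ {q : ℝ×ℝ | a.2 ≤ q.2}))
      (by exact ne_top_of_le_ne_top hKfin tsub_le_self) hest
    rw [ENNReal.toReal_sub_of_le (measure_mono (sep_subset _ _)) hKfin, ht45] at h1
    linarith
  -- bottom bound
  have hbot : (volume (K ∩ {q : ℝ×ℝ | q.2 ≤ b.2})).toReal ≤ 1/5 * (volume K).toReal := by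
    have hsubb : K ∩ {q : ℝ×ℝ | q.2 ≤ b.2} ⊆ {p ∈ K | p.2 ≤ y15} :=
      fun x hx => ⟨hx.1, hx.2.trans hby⟩
    have := ENNReal.toReal_mono fin15 (measure_mono hsubb)
    rw [ht15] at this
    linarith
  -- vertical bound, upper
  have hvtop : p.2 ≤ 2*a.2 - b.2 :=
    vert_bound hKconv hKc hab hV hmid htop hb le_rfl hp
  -- vertical bound, lower, via reflection
  have hvbot : 2*b.2 - a.2 ≤ p.2 := by
    set N : ℝ×ℝ → ℝ×ℝ := fun q => (q.1, -q.2) with hN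
    have hNcont : Continuous N := continuous_fst.prodMk continuous_snd.neg
    have hNinv : ∀ q, N (N q) = q := fun q => by simp [hN]
    have hK'conv : Convex ℝ (N ⁻¹' K) := by
      intro x hx y hy s t hs ht hst
      have : N (s • x + t • y) = s • N x + t • N y := by
        simp [hN, Prod.ext_iff, smul_eq_mul]
        ring
      show N (s • x + t • y) ∈ K
      rw [this]
      exact hKconv hx hy hs ht hst
    have himg : N ⁻¹' K = N '' K := by
      ext q
      constructor
      · intro h
        exact ⟨N q, h, hNinv q⟩
      · rintro ⟨x, hx, rfl⟩
        show N (N x) ∈ K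
        rw [hNinv]
        exact hx
    have hK'c : IsCompact (N ⁻¹' K) := by
      rw [himg]
      exact hKc.image hNcont
    have hmp : MeasurePreserving N volume volume := by
      rw [Measure.volume_eq_prod]
      exact (MeasurePreserving.id volume).prod (Measure.measurePreserving_neg volume)
    have hpre : ∀ S : Set (ℝ×ℝ), MeasurableSet S → volume (N ⁻¹' S) = volume S :=
      fun S hS => hmp.measure_preimage hS.nullMeasurableSet
    have hvolK' : volume (N ⁻¹' K) = volume K := hpre K hKm
    have hslabm : MeasurableSet (K ∩ {q : ℝ×ℝ | b.2 ≤ q.2 ∧ q.2 ≤ a.2}) :=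
      hKm.inter ((measurableSet_le measurable_const measurable_snd).inter
        (measurableSet_le measurable_snd measurable_const))
    have hbotm : MeasurableSet (K ∩ {q : ℝ×ℝ | q.2 ≤ b.2}) :=
      hKm.inter (measurableSet_le measurable_snd measurable_const)
    have hslab' : N ⁻¹' (K ∩ {q : ℝ×ℝ | b.2 ≤ q.2 ∧ q.2 ≤ a.2})
        = (N ⁻¹' K) ∩ {q : ℝ×ℝ | -a.2 ≤ q.2 ∧ q.2 ≤ -b.2} := by
      ext q
      simp only [mem_preimage, mem_inter_iff, mem_setOf_eq, hN]
      constructor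
      · rintro ⟨h1, h2, h3⟩
        exact ⟨h1, by linarith, by linarith⟩
      · rintro ⟨h1, h2, h3⟩
        exact ⟨h1, by linarith, by linarith⟩
    have htopK' : N ⁻¹' (K ∩ {q : ℝ×ℝ | q.2 ≤ b.2})
        = (N ⁻¹' K) ∩ {q : ℝ×ℝ | -b.2 ≤ q.2} := by
      ext q
      simp only [mem_preimage, mem_inter_iff, mem_setOf_eq, hN]
      constructor
      · rintro ⟨h1, h2⟩
        exact ⟨h1, by linarith⟩
      · rintro ⟨h1, h2⟩
        exact ⟨h1, by linarith⟩
    have hmid' : 3/5 * (volume (N ⁻¹' K)).toReal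
        ≤ (volume ((N ⁻¹' K) ∩ {q : ℝ×ℝ | -a.2 ≤ q.2 ∧ q.2 ≤ -b.2})).toReal := by
      rw [hvolK', ← hslab', hpre _ hslabm]
      exact hmid
    have htop' : (volume ((N ⁻¹' K) ∩ {q : ℝ×ℝ | -b.2 ≤ q.2})).toReal
        ≤ 1/5 * (volume (N ⁻¹' K)).toReal := by
      rw [hvolK', ← htopK', hpre _ hbotm]
      exact hbot
    have hV' : 0 < (volume (N ⁻¹' K)).toReal := by rw [hvolK']; exact hV
    have hbK' : N a ∈ N ⁻¹' K := by
      show N (N a) ∈ K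
      rw [hNinv]
      exact ha
    have hpK' : N p ∈ N ⁻¹' K := by
      show N (N p) ∈ K
      rw [hNinv]
      exact hp
    have happ := vert_bound hK'conv hK'c (show -a.2 < -b.2 by linarith) hV' hmid' htop'
      hbK' (le_rfl : (N a).2 ≤ -a.2) hpK'
    have : -p.2 ≤ 2*(-b.2) - (-a.2) := happ
    linarith
  -- horizontal bound
  have hdet := tri_det_le hKconv hKc ha hb hp
  have hdetA : |(b.1-a.1)*(p.2-a.2) - (p.1-a.1)*(b.2-a.2)| ≤ 2*A := by linarith
  have hh : 0 < a.2 - b.2 := by linarith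
  have hhne : a.2 - b.2 ≠ 0 := ne_of_gt hh
  set lam := (2*a.2 - b.2 - p.2)/(3*(a.2-b.2)) with hlamdef
  have hlam0 : 0 ≤ lam := div_nonneg (by linarith) (by linarith)
  have hlam1 : lam ≤ 1 := (div_le_one (by linarith)).2 (by linarith)
  set qpt := (1-lam) • ((2:ℝ)•a - b) + lam • ((2:ℝ)•b - a) with hqpt
  have hq1 : qpt.1 = (1-lam)*(2*a.1-b.1) + lam*(2*b.1-a.1) := by
    simp [hqpt, Prod.smul_fst, smul_eq_mul]
  have hq2 : qpt.2 = p.2 := by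
    have : qpt.2 = (1-lam)*(2*a.2-b.2) + lam*(2*b.2-a.2) := by
      simp [hqpt, Prod.smul_snd, smul_eq_mul]
    rw [this, hlamdef]
    field_simp
    ring
  have hco : p.1 - qpt.1
      = ((b.1-a.1)*(p.2-a.2) - (p.1-a.1)*(b.2-a.2))/(a.2-b.2) := by
    rw [hq1, hlamdef]
    field_simp
    ring
  refine ⟨qpt, ⟨1-lam, lam, by linarith, hlam0, by ring, rfl⟩, p.1 - qpt.1, ?_, ?_⟩
  · rw [hco, abs_div, abs_of_pos hh]
    apply div_le_div_of_nonneg_right hdetA hh.le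
  · have h1 : (qpt + (p.1 - qpt.1, (0:ℝ))).1 = p.1 := by simp
    have h2 : (qpt + (p.1 - qpt.1, (0:ℝ))).2 = p.2 := by simp [hq2]
    rw [Prod.ext_iff]
    exact ⟨h1.symm, h2.symm⟩
end

section
/- Let K be a convex body in the plane with A ≥ area(K), and let a, b ∈ K with y(a) > y(b). If z is a point whose horizontal distance to the line through 2a−b and 2b−a exceeds 2A/(y(a)−y(b)), and z lies between the horizontal lines through 2a−b and 2b−a, then z ∉ K. -/
open MeasureTheory Set
open scoped Pointwise

lemma vol_std_tri : volume {p : ℝ × ℝ | 0 < p.1 ∧ 0 < p.2 ∧ p.1 + p.2 < 1} = ENNReal.ofReal (1/2) := by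
  set f : ℝ → ℝ := fun _ => 0 with hf
  set g : ℝ → ℝ := fun x => 1 - x with hg
  have hset : {p : ℝ × ℝ | 0 < p.1 ∧ 0 < p.2 ∧ p.1 + p.2 < 1}
      = regionBetween f g (Ioo 0 1) := by
    ext ⟨x, y⟩
    simp only [regionBetween, mem_setOf_eq, mem_Ioo, hf, hg]
    exact ⟨fun ⟨h1, h2, h3⟩ => ⟨⟨h1, by linarith⟩, h2, by linarith⟩,
      fun ⟨⟨h1, _⟩, h2, h3⟩ => ⟨h1, h2, by linarith⟩⟩
  have hint : (∫ y in Ioo (0:ℝ) 1, (g - f) y) = ((1:ℝ)/2) := by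
    simp only [hf, hg, Pi.sub_apply, sub_zero]
    rw [← MeasureTheory.integral_Ioc_eq_integral_Ioo,
      ← intervalIntegral.integral_of_le (by norm_num : (0:ℝ) ≤ 1)]
    rw [intervalIntegral.integral_sub intervalIntegrable_const intervalIntegral.intervalIntegrable_id,
      integral_id, intervalIntegral.integral_const]
    norm_num
  have hfi : IntegrableOn f (Ioo (0:ℝ) 1) volume := integrableOn_const (by simp)
  have hgi : IntegrableOn g (Ioo (0:ℝ) 1) volume := by
    have : Continuous g := by rw [hg]; exact continuous_const.sub continuous_id
    exact this.integrableOn_Ioc.mono_set Ioo_subset_Ioc_self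
  rw [hset, MeasureTheory.Measure.volume_eq_prod,
    volume_regionBetween_eq_integral hfi hgi
      measurableSet_Ioo (fun x hx => by simp only [mem_Ioo] at hx; simp [hf, hg]; linarith [hx.2]), hint]


/-- Let `K` be a convex body, `A ≥ area(K)`, and `a, b ∈ K` with
`y(a) > y(b)`. Set `a' = 2a − b` and `b' = 2b − a`. If `z` lies (weakly) between the horizontal
lines through `a'` and `b'`, and the horizontal distance from `z` to the line through `a'` and
`b'` (i.e. the distance `|z.1 − w.1|`, where `w` is the point of that line at height `z.2`)
exceeds `2A/(y(a) − y(b))`, then `z ∉ K`. -/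
theorem not_mem_of_far_from_line
    (K : Set (ℝ × ℝ)) (hKc : IsCompact K) (hKconv : Convex ℝ K)
    (hKint : (interior K).Nonempty)
    (A : ℝ) (hA : (volume K).toReal ≤ A)
    (a b : ℝ × ℝ) (ha : a ∈ K) (hb : b ∈ K) (hy : b.2 < a.2)
    (z : ℝ × ℝ)
    (hz_between : ((2 : ℝ) • b - a).2 ≤ z.2 ∧ z.2 ≤ ((2 : ℝ) • a - b).2)
    (hz_far : ∀ s : ℝ,
        (((2 : ℝ) • a - b) + s • (((2 : ℝ) • b - a) - ((2 : ℝ) • a - b))).2 = z.2 →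
        2 * A / (a.2 - b.2) <
          |z.1 - (((2 : ℝ) • a - b) + s • (((2 : ℝ) • b - a) - ((2 : ℝ) • a - b))).1|) :
    z ∉ K := by
  intro hz
  set d : ℝ := a.2 - b.2 with hd_def
  have hd : 0 < d := sub_pos.2 hy
  have hA0 : 0 ≤ A := le_trans ENNReal.toReal_nonneg hA
  set s₀ : ℝ := (2 * a.2 - b.2 - z.2) / (3 * d) with hs₀
  have hW2 : (((2 : ℝ) • a - b) + s₀ • (((2 : ℝ) • b - a) - ((2 : ℝ) • a - b))).2 = z.2 := by
    simp only [Prod.snd_add, Prod.snd_sub, Prod.smul_snd, smul_eq_mul, hs₀]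
    field_simp
    ring
  have hfar := hz_far s₀ hW2
  set W1 : ℝ := (((2 : ℝ) • a - b) + s₀ • (((2 : ℝ) • b - a) - ((2 : ℝ) • a - b))).1 with hW1
  have hW1' : W1 = 2 * a.1 - b.1 + s₀ * (2 * b.1 - a.1 - (2 * a.1 - b.1)) := by
    simp [hW1, Prod.fst_add, Prod.fst_sub, Prod.smul_fst, smul_eq_mul]
  -- the linear map
  set L : (ℝ × ℝ) →ₗ[ℝ] (ℝ × ℝ) :=
    (LinearMap.fst ℝ ℝ ℝ).smulRight (b - a) + (LinearMap.snd ℝ ℝ ℝ).smulRight (z - a) with hL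
  have hdet : LinearMap.det L = (b.1 - a.1) * (z.2 - a.2) - (z.1 - a.1) * (b.2 - a.2) := by
    have hm : LinearMap.toMatrix (Module.Basis.finTwoProd ℝ) (Module.Basis.finTwoProd ℝ) L
        = !![b.1 - a.1, z.1 - a.1; b.2 - a.2, z.2 - a.2] := by
      ext i j
      rw [LinearMap.toMatrix_apply]
      fin_cases i <;> fin_cases j <;>
        simp [hL, Module.Basis.finTwoProd_zero, Module.Basis.finTwoProd_one, Module.Basis.coe_finTwoProd_repr]
    rw [← LinearMap.det_toMatrix (Module.Basis.finTwoProd ℝ), hm, Matrix.det_fin_two_of]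
  have hdet_eq : LinearMap.det L = d * (z.1 - W1) := by
    rw [hdet, hW1', hs₀]
    field_simp
    ring
  have habs : |LinearMap.det L| = d * |z.1 - W1| := by
    rw [hdet_eq, abs_mul, abs_of_pos hd]
  have h2A : 2 * A < |LinearMap.det L| := by
    rw [habs]
    have := (div_lt_iff₀ hd).1 hfar
    linarith
  -- the triangle
  set S : Set (ℝ × ℝ) := {p : ℝ × ℝ | 0 < p.1 ∧ 0 < p.2 ∧ p.1 + p.2 < 1} with hS
  set T : Set (ℝ × ℝ) := (fun p => a + L p) '' S with hT
  have hsub : T ⊆ K := by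
    rintro _ ⟨p, hp, rfl⟩
    obtain ⟨hp1, hp2, hp3⟩ := hp
    have hrepr : a + L p = (1 - p.1 - p.2) • a + p.1 • b + p.2 • z := by
      simp only [hL, LinearMap.add_apply, LinearMap.coe_smulRight, LinearMap.fst_apply,
        LinearMap.snd_apply, Prod.ext_iff, Prod.fst_add, Prod.snd_add, Prod.smul_fst,
        Prod.smul_snd, Prod.fst_sub, Prod.snd_sub, smul_eq_mul]
      constructor <;> ring
    show a + L p ∈ K
    rw [hrepr]
    have := hKconv.sum_mem (t := Finset.univ (α := Fin 3))
      (w := ![1 - p.1 - p.2, p.1, p.2]) (z := ![a, b, z])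
      (by intro i _; fin_cases i <;> simp <;> linarith)
      (by simp [Fin.sum_univ_three]; ring)
      (by intro i _; fin_cases i <;> simpa)
    simpa [Fin.sum_univ_three] using this
  have hvolT : volume T = ENNReal.ofReal (|LinearMap.det L| * (1/2)) := by
    have h1 : T = a +ᵥ (⇑L '' S) := by
      rw [hT, ← Set.image_vadd, Set.image_image]
      simp [vadd_eq_add]
    rw [h1, measure_vadd, Measure.addHaar_image_linearMap, vol_std_tri,
      ← ENNReal.ofReal_mul (abs_nonneg _)]
  have hKA : volume K ≤ ENNReal.ofReal A := by
    rw [← ENNReal.ofReal_toReal hKc.measure_lt_top.ne]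
    exact ENNReal.ofReal_le_ofReal hA
  have hlt : ENNReal.ofReal A < volume T := by
    rw [hvolT]
    exact (ENNReal.ofReal_lt_ofReal_iff (by linarith)).2 (by linarith)
  exact absurd ((measure_mono hsub).trans hKA) (not_le.2 hlt)
end

section
/- Let K be a convex body contained in a bounded measurable set P ⊆ ℝ² of positive area, and suppose A ≥ area(K). Let R be a set of N points chosen independently and uniformly at random in P with N ≥ 60·area(P)/area(K). Then with probability at least 2/3, R contains two points a and b such that y(a) ≥ y_{4/5}(K), y(b) ≤ y_{1/5}(K), a, b ∈ K, and hence K ⊆ Γ(a,b,A). -/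
open MeasureTheory Set

open Pointwise

lemma volume_corner : (volume : Measure (ℝ×ℝ)) (regionBetween (fun _ => (0:ℝ)) (fun x => 1 - x) (Set.Ioo 0 1)) = ENNReal.ofReal (1/2) := by
  have hint : IntegrableOn (fun x : ℝ => 1 - x) (Set.Ioo 0 1) volume :=
    ((continuous_const.sub continuous_id).integrableOn_Icc (a := 0) (b := 1)).mono_set Set.Ioo_subset_Icc_self
  rw [Measure.volume_eq_prod, volume_regionBetween_eq_integral (integrableOn_const (by simp) (by simp)) hint measurableSet_Ioo
    (fun x hx => by simp only [Set.mem_Ioo] at hx; linarith [hx.2])]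
  congr 1
  have h2 : ∀ x ∈ Set.Ioo (0:ℝ) 1, ((fun x : ℝ => 1 - x) - fun _ : ℝ => (0:ℝ)) x = 1 - x := by
    intro x _; simp
  rw [setIntegral_congr_fun measurableSet_Ioo h2, ← integral_Ioc_eq_integral_Ioo,
    ← intervalIntegral.integral_of_le zero_le_one]
  rw [intervalIntegral.integral_sub (intervalIntegrable_const (c := (1:ℝ))) intervalIntegral.intervalIntegrable_id]
  simp [integral_id]
  norm_num

lemma triangle_det_le {K : Set (ℝ × ℝ)} (hKconv : Convex ℝ K) (hKfin : volume K ≠ ⊤)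
    {a b p : ℝ × ℝ} (ha : a ∈ K) (hb : b ∈ K) (hp : p ∈ K) :
    |(b.1 - a.1) * (p.2 - a.2) - (b.2 - a.2) * (p.1 - a.1)| ≤ 2 * (volume K).toReal := by
  set M : Matrix (Fin 2) (Fin 2) ℝ := !![b.1 - a.1, p.1 - a.1; b.2 - a.2, p.2 - a.2] with hM
  set L := Matrix.toLin (Module.Basis.finTwoProd ℝ) (Module.Basis.finTwoProd ℝ) M with hL
  set T : Set (ℝ × ℝ) := regionBetween (fun _ => (0:ℝ)) (fun x => 1 - x) (Set.Ioo 0 1) with hT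
  have hTmem : ∀ z ∈ T, 0 < z.1 ∧ 0 < z.2 ∧ z.1 + z.2 < 1 := by
    rintro z ⟨hz1, hz2⟩
    simp only [Set.mem_Ioo] at hz1 hz2
    exact ⟨hz1.1, hz2.1, by linarith [hz2.2]⟩
  have hsub : (fun z : ℝ×ℝ => a + L z) '' T ⊆ K := by
    rintro _ ⟨z, hz, rfl⟩
    obtain ⟨hx, hy, hxy⟩ := hTmem z hz
    set u : ℝ := z.1 + z.2 with hu
    have hu0 : 0 < u := by positivity
    have hcm : (z.1/u) • b + (z.2/u) • p ∈ K :=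
      hKconv hb hp (by positivity) (by positivity) (by field_simp; exact hu.symm)
    have hm : (1 - u) • a + u • ((z.1/u) • b + (z.2/u) • p) ∈ K :=
      hKconv ha hcm (by linarith) hu0.le (by ring)
    convert hm using 1
    simp only [hL, hM, Matrix.toLin_finTwoProd_apply]
    have hz1 : u * (z.1 / u) = z.1 := by field_simp
    have hz2 : u * (z.2 / u) = z.2 := by field_simp
    apply Prod.ext <;>
      simp only [Prod.fst_add, Prod.snd_add, Prod.smul_fst, Prod.smul_snd, smul_eq_mul,
        Prod.fst_add, hu] <;> field_simp <;> ring
  have himg : volume ((fun z : ℝ×ℝ => a + L z) '' T) = ENNReal.ofReal |M.det| * ENNReal.ofReal (1/2) := by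
    have h1 : (fun z : ℝ×ℝ => a + L z) '' T = a +ᵥ (⇑L '' T) := by
      rw [← Set.image_vadd, Set.image_image]; rfl
    have hvT : volume T = ENNReal.ofReal (1/2) := volume_corner
    rw [h1, measure_vadd, Measure.addHaar_image_linearMap, hL, LinearMap.det_toLin, hvT]
  have hle : ENNReal.ofReal (|M.det| * (1/2)) ≤ volume K := by
    rw [ENNReal.ofReal_mul (abs_nonneg _), ← himg]
    exact measure_mono hsub
  have := (ENNReal.ofReal_le_iff_le_toReal hKfin).1 hle
  have hdet : M.det = (b.1 - a.1) * (p.2 - a.2) - (p.1 - a.1) * (b.2 - a.2) := by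
    rw [hM, Matrix.det_fin_two_of]
  rw [hdet] at this
  have : |(b.1 - a.1) * (p.2 - a.2) - (p.1 - a.1) * (b.2 - a.2)| ≤ 2 * (volume K).toReal := by linarith
  calc |(b.1 - a.1) * (p.2 - a.2) - (b.2 - a.2) * (p.1 - a.1)|
      = |(b.1 - a.1) * (p.2 - a.2) - (p.1 - a.1) * (b.2 - a.2)| := by ring_nf
    _ ≤ 2 * (volume K).toReal := this

lemma volume_hline (c : ℝ) : volume {q : ℝ × ℝ | q.2 = c} = 0 := by
  have h : {q : ℝ × ℝ | q.2 = c} = (Set.univ : Set ℝ) ×ˢ ({c} : Set ℝ) := by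
    ext q
    simp only [Set.mem_setOf_eq, Set.mem_prod, Set.mem_univ, Set.mem_singleton_iff, true_and]
  rw [h, Measure.volume_eq_prod, Measure.prod_prod]
  simp

lemma y15_lt_y45 {K : Set (ℝ × ℝ)} (hV0 : 0 < volume K) (hVfin : volume K ≠ ⊤) {y15 y45 : ℝ}
    (h15 : volume {p ∈ K | p.2 ≤ y15} = ENNReal.ofReal (1/5) * volume K)
    (h45 : volume {p ∈ K | p.2 ≤ y45} = ENNReal.ofReal (4/5) * volume K) :
    y15 < y45 := by
  by_contra h
  push_neg at h
  have hsub : {p ∈ K | p.2 ≤ y45} ⊆ {p ∈ K | p.2 ≤ y15} := fun p hp => ⟨hp.1, hp.2.trans h⟩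
  have hm := measure_mono (μ := volume) hsub
  rw [h45, h15] at hm
  have hVr : 0 < (volume K).toReal := ENNReal.toReal_pos hV0.ne' hVfin
  have h1 : ENNReal.ofReal (4/5) * volume K ≠ ⊤ := ENNReal.mul_ne_top ENNReal.ofReal_ne_top hVfin
  have h2 : ENNReal.ofReal (1/5) * volume K ≠ ⊤ := ENNReal.mul_ne_top ENNReal.ofReal_ne_top hVfin
  have := (ENNReal.toReal_le_toReal h1 h2).2 hm
  rw [ENNReal.toReal_mul, ENNReal.toReal_mul, ENNReal.toReal_ofReal (by norm_num),
    ENNReal.toReal_ofReal (by norm_num)] at this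
  nlinarith

/-- volume of an upper slab from a lower-slab hypothesis -/
lemma upper_slab_vol {K : Set (ℝ × ℝ)} (hKm : MeasurableSet K) (hVfin : volume K ≠ ⊤)
    {c r : ℝ} (hr0 : 0 ≤ r) (hr1 : r ≤ 1)
    (h : volume {p ∈ K | p.2 ≤ c} = ENNReal.ofReal r * volume K) :
    volume {p ∈ K | c ≤ p.2} = ENNReal.ofReal (1 - r) * volume K := by
  have hmle : MeasurableSet {p ∈ K | p.2 ≤ c} :=
    hKm.inter (measurableSet_le measurable_snd measurable_const)
  have hmlt : MeasurableSet {p ∈ K | p.2 < c} :=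
    hKm.inter (measurableSet_lt measurable_snd measurable_const)
  have hlt : volume {p ∈ K | p.2 < c} = ENNReal.ofReal r * volume K := by
    apply le_antisymm
    · rw [← h]; exact measure_mono fun p hp => ⟨hp.1, hp.2.le⟩
    · rw [← h]
      calc volume {p ∈ K | p.2 ≤ c}
          ≤ volume ({p ∈ K | p.2 < c} ∪ {q : ℝ × ℝ | q.2 = c}) := by
            apply measure_mono
            rintro p ⟨hpK, hple⟩
            rcases lt_or_eq_of_le hple with h' | h'
            · exact Or.inl ⟨hpK, h'⟩
            · exact Or.inr h'
        _ ≤ volume {p ∈ K | p.2 < c} + volume {q : ℝ × ℝ | q.2 = c} := measure_union_le _ _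
        _ = volume {p ∈ K | p.2 < c} := by rw [volume_hline, add_zero]
  have hdiff : K \ {p ∈ K | p.2 < c} = {p ∈ K | c ≤ p.2} := by
    ext q; by_cases hq : q ∈ K <;> simp [hq, not_lt]
  have hfin : volume {p ∈ K | p.2 < c} ≠ ⊤ :=
    ((measure_mono (Set.sep_subset _ _)).trans_lt hVfin.lt_top).ne
  have hmeq : volume {p ∈ K | c ≤ p.2} = volume K - volume {p ∈ K | p.2 < c} := by
    rw [← hdiff, measure_diff (Set.sep_subset _ _) hmlt.nullMeasurableSet hfin]
  rw [hmeq, hlt]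
  apply ENNReal.sub_eq_of_eq_add (ENNReal.mul_ne_top ENNReal.ofReal_ne_top hVfin)
  rw [← add_mul, ← ENNReal.ofReal_add (by linarith) hr0]
  norm_num

lemma upper_y_bound {K : Set (ℝ × ℝ)} (hKc : IsCompact K) (hKconv : Convex ℝ K)
    (hKint : (interior K).Nonempty) {y15 y45 : ℝ}
    (h15 : volume {p ∈ K | p.2 ≤ y15} = ENNReal.ofReal (1/5) * volume K)
    (h45 : volume {p ∈ K | p.2 ≤ y45} = ENNReal.ofReal (4/5) * volume K)
    {p : ℝ × ℝ} (hp : p ∈ K) : p.2 ≤ 2 * y45 - y15 := by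
  have hKm : MeasurableSet K := hKc.isClosed.measurableSet
  have hVfin : volume K ≠ ⊤ := hKc.measure_lt_top.ne
  have hV0 : 0 < volume K := Measure.measure_pos_of_nonempty_interior _ hKint
  have hVr : 0 < (volume K).toReal := ENNReal.toReal_pos hV0.ne' hVfin
  have hyy : y15 < y45 := y15_lt_y45 hV0 hVfin h15 h45
  by_contra hM
  push_neg at hM
  set ε : ℝ := (p.2 + y15) / 2 - y45 with hε
  have hε0 : 0 < ε := by simp only [hε]; linarith
  clear_value ε
  -- the strictly-above-y45 part of K has volume exactly V/5
  set B := {q ∈ K | y45 < q.2} with hB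
  have hBr : (volume B).toReal = (volume K).toReal - 4/5 * (volume K).toReal := by
    have hmle : MeasurableSet {q ∈ K | q.2 ≤ y45} :=
      hKm.inter (measurableSet_le measurable_snd measurable_const)
    have hfin : volume {q ∈ K | q.2 ≤ y45} ≠ ⊤ :=
      ((measure_mono (Set.sep_subset _ _)).trans_lt hVfin.lt_top).ne
    have hdiff : K \ {q ∈ K | q.2 ≤ y45} = B := by
      ext q; by_cases hq : q ∈ K <;> simp [hB, hq, not_le]
    have : volume B = volume K - volume {q ∈ K | q.2 ≤ y45} := by
      rw [← hdiff, measure_diff (Set.sep_subset _ _) hmle.nullMeasurableSet hfin]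
    rw [this, ENNReal.toReal_sub_of_le (measure_mono (Set.sep_subset _ _)) hVfin, h45,
      ENNReal.toReal_mul, ENNReal.toReal_ofReal (by norm_num)]
  -- the above-y15 part of K has volume at least 4V/5
  set S := {q ∈ K | y15 ≤ q.2} with hS
  have hSfin : volume S ≠ ⊤ := ((measure_mono (Set.sep_subset _ _)).trans_lt hVfin.lt_top).ne
  have hSr : 4/5 * (volume K).toReal ≤ (volume S).toReal := by
    have hcover : volume K ≤ ENNReal.ofReal (1/5) * volume K + volume S := by
      rw [← h15]
      refine (measure_mono ?_).trans (measure_union_le _ _)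
      intro q hq
      rcases le_or_gt q.2 y15 with h' | h'
      · exact Or.inl ⟨hq, h'⟩
      · exact Or.inr ⟨hq, h'.le⟩
    have h1 : ENNReal.ofReal (1/5) * volume K ≠ ⊤ := ENNReal.mul_ne_top ENNReal.ofReal_ne_top hVfin
    have := (ENNReal.toReal_le_toReal hVfin (by exact ENNReal.add_ne_top.2 ⟨h1, hSfin⟩)).2 hcover
    rw [ENNReal.toReal_add h1 hSfin, ENNReal.toReal_mul,
      ENNReal.toReal_ofReal (by norm_num)] at this
    linarith
  -- contract K∩{y≥y15} towards p by 1/2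
  set A1 := {q ∈ K | y45 + ε ≤ q.2} with hA1
  have hA1fin : volume A1 ≠ ⊤ := ((measure_mono (Set.sep_subset _ _)).trans_lt hVfin.lt_top).ne
  have hA1r : 1/4 * (volume S).toReal ≤ (volume A1).toReal := by
    have himg_sub : ⇑(AffineMap.homothety p (1/2 : ℝ)) '' S ⊆ A1 := by
      rintro _ ⟨q, hq, rfl⟩
      rw [AffineMap.homothety_apply]
      simp only [vsub_eq_sub, vadd_eq_add]
      have heq : (1/2 : ℝ) • (q - p) + p = (1/2 : ℝ) • q + (1/2 : ℝ) • p := by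
        rw [smul_sub]; module
      constructor
      · rw [heq]; exact hKconv hq.1 hp (by norm_num) (by norm_num) (by norm_num)
      · have : ((1/2 : ℝ) • (q - p) + p).2 = (q.2 + p.2) / 2 := by
          simp [Prod.smul_snd, Prod.snd_sub]; ring
        rw [this]
        have := hq.2
        simp only [hε]
        linarith
    have himg_vol : volume (⇑(AffineMap.homothety p (1/2 : ℝ)) '' S)
        = ENNReal.ofReal (1/4) * volume S := by
      rw [Measure.addHaar_image_homothety]
      rw [show Module.finrank ℝ (ℝ × ℝ) = 2 by simp]
      rw [abs_of_nonneg (by norm_num : (0:ℝ) ≤ (1/2)^2)]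
      norm_num
    have hle : ENNReal.ofReal (1/4) * volume S ≤ volume A1 := by
      rw [← himg_vol]; exact measure_mono himg_sub
    have h1 : ENNReal.ofReal (1/4) * volume S ≠ ⊤ := ENNReal.mul_ne_top ENNReal.ofReal_ne_top hSfin
    have := (ENNReal.toReal_le_toReal h1 hA1fin).2 hle
    rwa [ENNReal.toReal_mul, ENNReal.toReal_ofReal (by norm_num)] at this
  -- a nonempty open chunk of K strictly between y45 and y45+ε
  set U := interior K ∩ {q : ℝ × ℝ | y45 < q.2 ∧ q.2 < y45 + ε} with hU
  have hUopen : IsOpen U := isOpen_interior.inter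
    ((isOpen_lt continuous_const continuous_snd).inter (isOpen_lt continuous_snd continuous_const))
  have hUne : U.Nonempty := by
    -- a point of K strictly below y45
    have hlowpos : 0 < volume {q ∈ K | q.2 < y45} := by
      rcases eq_or_lt_of_le (zero_le : (0 : ENNReal) ≤ volume {q ∈ K | q.2 < y45}) with h0 | h0
      · exfalso
        have hle : volume {q ∈ K | q.2 ≤ y45}
            ≤ volume {q ∈ K | q.2 < y45} + volume {q : ℝ × ℝ | q.2 = y45} := by
          refine (measure_mono ?_).trans (measure_union_le _ _)
          rintro q ⟨hqK, hq⟩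
          rcases lt_or_eq_of_le hq with h' | h'
          · exact Or.inl ⟨hqK, h'⟩
          · exact Or.inr h'
        rw [h45, ← h0, volume_hline, add_zero] at hle
        have : (0 : ENNReal) < ENNReal.ofReal (4/5) * volume K :=
          ENNReal.mul_pos (ENNReal.ofReal_pos.2 (by norm_num)).ne' hV0.ne'
        exact absurd (le_antisymm hle zero_le) this.ne'
      · exact h0
    obtain ⟨qlo, hqloK, hqlo⟩ := nonempty_of_measure_ne_zero hlowpos.ne'
    -- a point m of K at height y45 + ε/2, by IVT along [qlo, p]
    have hcont : ContinuousOn (fun s : ℝ => (1 - s) * qlo.2 + s * p.2) (Set.Icc 0 1) :=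
      (Continuous.add (continuous_const.sub continuous_id |>.mul continuous_const)
        (continuous_id.mul continuous_const)).continuousOn
    have hmem : y45 + ε/2 ∈ Set.Icc ((1 - (0:ℝ)) * qlo.2 + 0 * p.2)
        ((1 - (1:ℝ)) * qlo.2 + 1 * p.2) := by
      simp only [Set.mem_Icc]
      constructor
      · norm_num; linarith
      · norm_num; simp only [hε]; linarith
    obtain ⟨s, hsIcc, hs⟩ := intermediate_value_Icc (zero_le_one) hcont hmem
    set m := (1 - s) • qlo + s • p with hm
    have hmK : m ∈ K := hKconv hqloK hp (by linarith [hsIcc.2]) hsIcc.1 (by ring)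
    have hm2 : m.2 = y45 + ε/2 := by
      rw [hm, ← hs]
      simp [Prod.smul_snd]
    -- move slightly towards an interior point
    obtain ⟨z₀, hz₀⟩ := hKint
    set D : ℝ := |z₀.2 - m.2| with hD
    have hD0 : 0 ≤ D := abs_nonneg _
    set t : ℝ := (ε/4) / (D + ε/4) with ht
    have ht0 : 0 < t := by positivity
    have ht1 : t ≤ 1 := by
      rw [ht, div_le_one (by positivity)]; linarith
    have htD : t * D ≤ ε/4 := by
      rw [ht, div_mul_eq_mul_div, div_le_iff₀ (by positivity)]
      nlinarith
    set z := t • z₀ + (1 - t) • m with hz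
    have hzint : z ∈ interior K :=
      hKconv.combo_interior_closure_mem_interior hz₀ (subset_closure hmK) ht0
        (by linarith) (by ring)
    have hz2 : z.2 - m.2 = t * (z₀.2 - m.2) := by
      rw [hz]; simp [Prod.smul_snd]; ring
    have habs : |z.2 - m.2| ≤ ε/4 := by
      rw [hz2, abs_mul, abs_of_pos ht0]; exact htD
    have h1 := abs_le.1 habs
    rw [hm2] at h1
    refine ⟨z, hzint, by linarith [h1.1], ?_⟩
    have h2 := h1.2
    show z.2 < y45 + ε
    linarith [h2, hε0]
  have hU0 : 0 < volume U := hUopen.measure_pos volume hUne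
  have hUfin : volume U ≠ ⊤ := ((measure_mono (fun q hq => interior_subset hq.1 : U ⊆ K)).trans_lt
    hVfin.lt_top).ne
  have hUr : 0 < (volume U).toReal := ENNReal.toReal_pos hU0.ne' hUfin
  -- A1 and U are disjoint subsets of B
  have hdisj : Disjoint A1 U := by
    rw [Set.disjoint_left]
    rintro q ⟨_, hq1⟩ ⟨_, _, hq2⟩
    linarith
  have hsum : volume A1 + volume U ≤ volume B := by
    rw [← measure_union hdisj hUopen.measurableSet]
    apply measure_mono
    rintro q (⟨hqK, hq⟩ | ⟨hqint, hq, _⟩)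
    · exact ⟨hqK, by linarith⟩
    · exact ⟨interior_subset hqint, hq⟩
  have hBfin : volume B ≠ ⊤ := ((measure_mono (Set.sep_subset _ _)).trans_lt hVfin.lt_top).ne
  have := (ENNReal.toReal_le_toReal (ENNReal.add_ne_top.2 ⟨hA1fin, hUfin⟩) hBfin).2 hsum
  rw [ENNReal.toReal_add hA1fin hUfin, hBr] at this
  linarith

lemma lower_y_bound {K : Set (ℝ × ℝ)} (hKc : IsCompact K) (hKconv : Convex ℝ K)
    (hKint : (interior K).Nonempty) {y15 y45 : ℝ}
    (h15 : volume {p ∈ K | p.2 ≤ y15} = ENNReal.ofReal (1/5) * volume K)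
    (h45 : volume {p ∈ K | p.2 ≤ y45} = ENNReal.ofReal (4/5) * volume K)
    {p : ℝ × ℝ} (hp : p ∈ K) : 2 * y15 - y45 ≤ p.2 := by
  have hKm : MeasurableSet K := hKc.isClosed.measurableSet
  have hVfin : volume K ≠ ⊤ := hKc.measure_lt_top.ne
  set ℓ : ℝ × ℝ →ₗ[ℝ] ℝ × ℝ := LinearMap.prodMap LinearMap.id (-LinearMap.id) with hℓ
  have happ : ∀ q : ℝ × ℝ, ℓ q = (q.1, -q.2) := fun q => rfl
  have hcontℓ : Continuous ⇑ℓ := ℓ.continuous_of_finiteDimensional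
  have hinv : Function.Involutive ⇑ℓ := fun q => by simp [happ]
  have hmp : MeasurePreserving ⇑ℓ volume volume := by
    have h1 : MeasurePreserving (Prod.map (fun x : ℝ => x) (fun x : ℝ => -x)) volume volume := by
      rw [Measure.volume_eq_prod]
      exact (MeasurePreserving.id volume).prod (Measure.measurePreserving_neg volume)
    exact h1
  have himg : ∀ S : Set (ℝ × ℝ), MeasurableSet S → volume (⇑ℓ '' S) = volume S := by
    intro S hS
    rw [Set.image_eq_preimage_of_inverse hinv hinv]
    exact hmp.measure_preimage hS.nullMeasurableSet
  set K' := ⇑ℓ '' K with hK'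
  have hK'c : IsCompact K' := hKc.image hcontℓ
  have hK'conv : Convex ℝ K' := hKconv.linear_image ℓ
  have hK'int : (interior K').Nonempty := by
    obtain ⟨z, hz⟩ := hKint
    have hhom : ⇑ℓ '' interior K = interior K' := by
      have : (Homeomorph.prodCongr (Homeomorph.refl ℝ) (Homeomorph.neg ℝ)) '' interior K
          = interior ((Homeomorph.prodCongr (Homeomorph.refl ℝ) (Homeomorph.neg ℝ)) '' K) :=
        Homeomorph.image_interior _ _
      exact this
    exact ⟨ℓ z, hhom ▸ Set.mem_image_of_mem _ hz⟩
  have hVK' : volume K' = volume K := himg K hKm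
  have hset : ∀ c : ℝ, {q ∈ K' | q.2 ≤ -c} = ⇑ℓ '' {p ∈ K | c ≤ p.2} := by
    intro c
    ext q
    constructor
    · rintro ⟨⟨w, hwK, rfl⟩, hq⟩
      rw [happ] at hq ⊢
      exact ⟨w, ⟨hwK, by simpa using hq⟩, rfl⟩
    · rintro ⟨w, ⟨hwK, hw⟩, rfl⟩
      exact ⟨⟨w, hwK, rfl⟩, by rw [happ]; simpa using hw⟩
  have hmeas : ∀ c : ℝ, MeasurableSet {p ∈ K | c ≤ p.2} :=
    fun c => hKm.inter (measurableSet_le measurable_const measurable_snd)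
  have h15' : volume {q ∈ K' | q.2 ≤ -y45} = ENNReal.ofReal (1/5) * volume K' := by
    rw [hset y45, himg _ (hmeas y45), upper_slab_vol hKm hVfin (by norm_num) (by norm_num) h45,
      hVK']
    norm_num
  have h45' : volume {q ∈ K' | q.2 ≤ -y15} = ENNReal.ofReal (4/5) * volume K' := by
    rw [hset y15, himg _ (hmeas y15), upper_slab_vol hKm hVfin (by norm_num) (by norm_num) h15,
      hVK']
    norm_num
  have := upper_y_bound hK'c hK'conv hK'int h15' h45' (Set.mem_image_of_mem _ hp)
  rw [happ] at this
  simp only at this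
  linarith

lemma subset_Gamma {K : Set (ℝ × ℝ)} (hKc : IsCompact K) (hKconv : Convex ℝ K)
    (hKint : (interior K).Nonempty) {y15 y45 : ℝ}
    (h15 : volume {p ∈ K | p.2 ≤ y15} = ENNReal.ofReal (1/5) * volume K)
    (h45 : volume {p ∈ K | p.2 ≤ y45} = ENNReal.ofReal (4/5) * volume K)
    {A : ℝ} (hA : (volume K).toReal ≤ A)
    {a b : ℝ × ℝ} (ha : a ∈ K) (hb : b ∈ K) (hay : y45 ≤ a.2) (hby : b.2 ≤ y15) :
    K ⊆ Gamma a b A := by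
  have hVfin : volume K ≠ ⊤ := hKc.measure_lt_top.ne
  have hV0 : 0 < volume K := Measure.measure_pos_of_nonempty_interior _ hKint
  have hyy : y15 < y45 := y15_lt_y45 hV0 hVfin h15 h45
  have hh : 0 < a.2 - b.2 := by linarith
  intro p hp
  have hup : p.2 ≤ 2 * y45 - y15 := upper_y_bound hKc hKconv hKint h15 h45 hp
  have hlo : 2 * y15 - y45 ≤ p.2 := lower_y_bound hKc hKconv hKint h15 h45 hp
  have hdet : |(b.1 - a.1) * (p.2 - a.2) - (b.2 - a.2) * (p.1 - a.1)| ≤ 2 * (volume K).toReal :=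
    triangle_det_le hKconv hVfin ha hb hp
  set s : ℝ := (2 * a.2 - b.2 - p.2) / (3 * (a.2 - b.2)) with hs
  have hs0 : 0 ≤ s := by
    apply div_nonneg _ (by linarith)
    linarith
  have hs1 : s ≤ 1 := by
    rw [hs, div_le_one (by linarith)]
    linarith
  set q : ℝ × ℝ := (1 - s) • ((2 : ℝ) • a - b) + s • ((2 : ℝ) • b - a) with hq
  have hq2 : q.2 = p.2 := by
    simp only [hq, Prod.snd_add, Prod.smul_snd, Prod.snd_sub, Prod.smul_snd, smul_eq_mul]
    rw [hs]
    field_simp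
    ring
  refine ⟨q, ⟨1 - s, s, by linarith, hs0, by ring, rfl⟩, p.1 - q.1, ?_, ?_⟩
  · have hq1 : q.1 = (1 - s) * (2 * a.1 - b.1) + s * (2 * b.1 - a.1) := by
      simp only [hq, Prod.fst_add, Prod.smul_fst, Prod.fst_sub, smul_eq_mul]
    have key : (p.1 - q.1) * (a.2 - b.2)
        = (b.1 - a.1) * (p.2 - a.2) - (b.2 - a.2) * (p.1 - a.1) := by
      rw [hq1, hs]
      field_simp
      ring
    have habs : |p.1 - q.1| * (a.2 - b.2) ≤ 2 * A := by
      calc |p.1 - q.1| * (a.2 - b.2) = |p.1 - q.1| * |a.2 - b.2| := by rw [abs_of_pos hh]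
        _ = |(p.1 - q.1) * (a.2 - b.2)| := (abs_mul _ _).symm
        _ ≤ 2 * (volume K).toReal := by rw [key]; exact hdet
        _ ≤ 2 * A := by linarith
    rw [abs_of_pos hh, le_div_iff₀ hh]
    exact habs
  · apply Prod.ext
    · simp
    · simp [hq2]

/-- Let `K` be a convex body contained in a bounded measurable set `P` of
positive area, `A ≥ area(K)`, and let `y15`, `y45` be the levels splitting off a `1/5` resp.
`4/5` area fraction of `K` from below. If `N ≥ 60·area(P)/area(K)` points are sampled
independently and uniformly at random in `P`, then with probability at least `2/3` the sample
contains points `a, b ∈ K` with `y(a) ≥ y_{4/5}(K)` and `y(b) ≤ y_{1/5}(K)`, and hence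
`K ⊆ Γ(a,b,A)`. -/
theorem sample_gamma_contains
    (P K : Set (ℝ × ℝ)) (hPm : MeasurableSet P) (hPb : Bornology.IsBounded P)
    (hPpos : 0 < volume P)
    (hKc : IsCompact K) (hKconv : Convex ℝ K) (hKint : (interior K).Nonempty)
    (hKP : K ⊆ P)
    (A : ℝ) (hA : (volume K).toReal ≤ A)
    (y15 y45 : ℝ)
    (h15 : volume {p ∈ K | p.2 ≤ y15} = ENNReal.ofReal (1/5) * volume K)
    (h45 : volume {p ∈ K | p.2 ≤ y45} = ENNReal.ofReal (4/5) * volume K)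
    (N : ℕ) (hN : 60 * (volume P).toReal / (volume K).toReal ≤ (N : ℝ)) :
    2/3 ≤
      Measure.pi (fun _ : Fin N => (volume P)⁻¹ • volume.restrict P)
        {ω | ∃ i j : Fin N, ω i ∈ K ∧ ω j ∈ K ∧
              y45 ≤ (ω i).2 ∧ (ω j).2 ≤ y15 ∧ K ⊆ Gamma (ω i) (ω j) A} := by
  classical
  have hPfin : volume P ≠ ⊤ := hPb.measure_lt_top.ne
  have hKm : MeasurableSet K := hKc.isClosed.measurableSet
  have hVfin : volume K ≠ ⊤ := hKc.measure_lt_top.ne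
  have hV0 : 0 < volume K := Measure.measure_pos_of_nonempty_interior _ hKint
  set Vr := (volume K).toReal with hVr
  set Pr := (volume P).toReal with hPr
  have hVr0 : 0 < Vr := ENNReal.toReal_pos hV0.ne' hVfin
  have hPr0 : 0 < Pr := ENNReal.toReal_pos hPpos.ne' hPfin
  set μ : Measure (ℝ × ℝ) := (volume P)⁻¹ • volume.restrict P with hμ
  haveI hprob : IsProbabilityMeasure μ := by
    constructor
    rw [hμ, Measure.smul_apply, Measure.restrict_apply_univ, smul_eq_mul,
      ENNReal.inv_mul_cancel hPpos.ne' hPfin]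
  set S₁ := {p ∈ K | y45 ≤ p.2} with hS₁
  set S₂ := {p ∈ K | p.2 ≤ y15} with hS₂
  have hS₁m : MeasurableSet S₁ := hKm.inter (measurableSet_le measurable_const measurable_snd)
  have hS₂m : MeasurableSet S₂ := hKm.inter (measurableSet_le measurable_snd measurable_const)
  have hvolS₁ : volume S₁ = ENNReal.ofReal (1/5) * volume K := by
    have h := upper_slab_vol hKm hVfin (c := y45) (r := 4/5) (by norm_num) (by norm_num) h45
    rw [hS₁, h]
    norm_num
  have hvolS₂ : volume S₂ = ENNReal.ofReal (1/5) * volume K := h15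
  set x : ℝ := Vr / (5 * Pr) with hx
  have hx0 : 0 ≤ x := by positivity
  have hx1 : x ≤ 1 := by
    have hVP : Vr ≤ Pr := (ENNReal.toReal_le_toReal hVfin hPfin).2 (measure_mono hKP)
    rw [hx, div_le_one (by positivity)]
    linarith
  have hμcompl : ∀ S : Set (ℝ × ℝ), MeasurableSet S → S ⊆ P →
      volume S = ENNReal.ofReal (1/5) * volume K → μ Sᶜ ≤ ENNReal.ofReal (1 - x) := by
    intro S hSm hSP hvol
    have hval : μ S = ENNReal.ofReal x := by
      rw [hμ, Measure.smul_apply, Measure.restrict_apply hSm,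
        Set.inter_eq_self_of_subset_left hSP, hvol, smul_eq_mul]
      rw [show volume K = ENNReal.ofReal Vr from (ENNReal.ofReal_toReal hVfin).symm,
        show volume P = ENNReal.ofReal Pr from (ENNReal.ofReal_toReal hPfin).symm,
        ← ENNReal.ofReal_inv_of_pos hPr0, ← ENNReal.ofReal_mul (by norm_num),
        ← ENNReal.ofReal_mul (by positivity)]
      rw [hx]
      congr 1
      field_simp
    rw [prob_compl_eq_one_sub hSm, hval, ← ENNReal.ofReal_one,
      ← ENNReal.ofReal_sub _ hx0]
  have hmiss : ∀ S : Set (ℝ × ℝ), MeasurableSet S → μ Sᶜ ≤ ENNReal.ofReal (1 - x) →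
      Measure.pi (fun _ : Fin N => μ) {ω | ∀ i, ω i ∉ S} ≤ ENNReal.ofReal ((1-x)^N) := by
    intro S hSm hc
    have hset : {ω : Fin N → ℝ × ℝ | ∀ i, ω i ∉ S} = Set.pi Set.univ (fun _ => Sᶜ) := by
      ext ω; simp [Set.mem_pi]
    rw [hset, Measure.pi_pi]
    calc ∏ _i : Fin N, μ Sᶜ ≤ ∏ _i : Fin N, ENNReal.ofReal (1-x) :=
          Finset.prod_le_prod' (fun _ _ => hc)
      _ = ENNReal.ofReal ((1-x)^N) := by
          rw [Finset.prod_const, Finset.card_univ, Fintype.card_fin,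
            ← ENNReal.ofReal_pow (by linarith)]
  have hNx : 12 ≤ (N : ℝ) * x := by
    have h1 : 60 * Pr ≤ (N : ℝ) * Vr := by
      rw [div_le_iff₀ hVr0] at hN
      linarith
    have h2 : (N : ℝ) * x = ((N : ℝ) * Vr) / (5 * Pr) := by rw [hx]; ring
    rw [h2, le_div_iff₀ (by positivity)]
    linarith
  have hpow : (1-x)^N ≤ 1/13 := by
    have hexp : 1 - x ≤ Real.exp (-x) := by linarith [Real.add_one_le_exp (-x)]
    calc (1-x)^N ≤ (Real.exp (-x))^N := pow_le_pow_left₀ (by linarith) hexp N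
      _ = Real.exp (-((N : ℝ) * x)) := by
          rw [← Real.exp_nat_mul]; ring_nf
      _ ≤ Real.exp (-12) := Real.exp_le_exp.2 (by linarith)
      _ ≤ 1/13 := by
          have h13 : (13:ℝ) ≤ Real.exp 12 := by linarith [Real.add_one_le_exp (12:ℝ)]
          rw [Real.exp_neg, one_div]
          exact inv_anti₀ (by norm_num) h13
  -- good events
  set A1 : Set (Fin N → ℝ × ℝ) := ⋃ i, (fun ω => ω i) ⁻¹' S₁ with hA1
  set A2 : Set (Fin N → ℝ × ℝ) := ⋃ i, (fun ω => ω i) ⁻¹' S₂ with hA2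
  have hA1m : MeasurableSet A1 := MeasurableSet.iUnion fun i => (measurable_pi_apply i) hS₁m
  have hA2m : MeasurableSet A2 := MeasurableSet.iUnion fun i => (measurable_pi_apply i) hS₂m
  have hA1c : A1ᶜ = {ω : Fin N → ℝ × ℝ | ∀ i, ω i ∉ S₁} := by
    ext ω; simp [hA1]
  have hA2c : A2ᶜ = {ω : Fin N → ℝ × ℝ | ∀ i, ω i ∉ S₂} := by
    ext ω; simp [hA2]
  have hsubP : ∀ {S : Set (ℝ × ℝ)}, S ⊆ K → S ⊆ P := fun h => h.trans hKP
  have hb1 : Measure.pi (fun _ : Fin N => μ) A1ᶜ ≤ ENNReal.ofReal (1/13) := by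
    rw [hA1c]
    exact (hmiss S₁ hS₁m (hμcompl S₁ hS₁m (hsubP (Set.sep_subset _ _)) hvolS₁)).trans
      (ENNReal.ofReal_le_ofReal hpow)
  have hb2 : Measure.pi (fun _ : Fin N => μ) A2ᶜ ≤ ENNReal.ofReal (1/13) := by
    rw [hA2c]
    exact (hmiss S₂ hS₂m (hμcompl S₂ hS₂m (hsubP (Set.sep_subset _ _)) hvolS₂)).trans
      (ENNReal.ofReal_le_ofReal hpow)
  haveI : IsProbabilityMeasure (Measure.pi (fun _ : Fin N => μ)) := inferInstance
  have hcompl : Measure.pi (fun _ : Fin N => μ) (A1 ∩ A2)ᶜ ≤ ENNReal.ofReal (2/13) := by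
    rw [Set.compl_inter]
    refine (measure_union_le _ _).trans ?_
    refine (add_le_add hb1 hb2).trans ?_
    rw [← ENNReal.ofReal_add (by norm_num) (by norm_num)]
    norm_num
  have hgood : ENNReal.ofReal (11/13) ≤ Measure.pi (fun _ : Fin N => μ) (A1 ∩ A2) := by
    rw [prob_compl_eq_one_sub (hA1m.inter hA2m)] at hcompl
    have h1 : (1 : ENNReal) ≤ ENNReal.ofReal (2/13) + Measure.pi (fun _ : Fin N => μ) (A1 ∩ A2) :=
      tsub_le_iff_right.1 hcompl
    have h2 : (1 : ENNReal) - ENNReal.ofReal (2/13) ≤ Measure.pi (fun _ : Fin N => μ) (A1 ∩ A2) :=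
      tsub_le_iff_left.2 h1
    calc ENNReal.ofReal (11/13) = 1 - ENNReal.ofReal (2/13) := by
          rw [← ENNReal.ofReal_one, ← ENNReal.ofReal_sub _ (by norm_num)]
          norm_num
      _ ≤ _ := h2
  have hsub_event : A1 ∩ A2 ⊆ {ω : Fin N → ℝ × ℝ | ∃ i j : Fin N, ω i ∈ K ∧ ω j ∈ K ∧
      y45 ≤ (ω i).2 ∧ (ω j).2 ≤ y15 ∧ K ⊆ Gamma (ω i) (ω j) A} := by
    rintro ω ⟨hω1, hω2⟩
    rw [hA1, Set.mem_iUnion] at hω1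
    rw [hA2, Set.mem_iUnion] at hω2
    obtain ⟨i, hi⟩ := hω1
    obtain ⟨j, hj⟩ := hω2
    exact ⟨i, j, hi.1, hj.1, hi.2, hj.2,
      subset_Gamma hKc hKconv hKint h15 h45 hA hi.1 hj.1 hi.2 hj.2⟩
  calc (2/3 : ENNReal) = ENNReal.ofReal (2/3) := by
        rw [ENNReal.ofReal_div_of_pos (by norm_num)]
        norm_num [ENNReal.ofReal_ofNat]
    _ ≤ ENNReal.ofReal (11/13) := ENNReal.ofReal_le_ofReal (by norm_num)
    _ ≤ Measure.pi (fun _ : Fin N => μ) (A1 ∩ A2) := hgood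
    _ ≤ _ := measure_mono hsub_event
end
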